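/- arXiv:2203.07409 — 13 statements merged into one kernel-verified Lean document; each statement's English description precedes it below -/
import Mathlib

section
/- Let (T,[·,·,·],α) be a multiplicative Hom Lie triple system over a field k, V a k-vector space, A ∈ End(V), and θ : T×T → End(V) a bilinear map satisfying (R1), (R2) and (R3). Then E_V = T ⊕ V is a multiplicative Hom Lie triple system under the bracket [(a,u),(b,v),(c,w)]_V = ([a,b,c], θ(b,c)(u) − θ(a,c)(v) + D(a,b)(w)) and the twist map β(a,u) = (α(a),A(u)); moreover T ≅ T⊕0 is a Hom Lie triple subsystem, the bracket of three elements of E_V lies in V whenever one of them lies in V, and it vanishes whenever two of them lie in V. -/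
/-!
Each identity on `T × V` splits into components. The `T`-components are the axioms of `T`.
Since the bracket vanishes on any two `V`-arguments, a `V`-component is a sum of terms each
linear in a single `V`-argument, which can be treated on its own. In the fundamental identity
(iii) the terms in the `V`-part of either of the first two slots are one instance of (R2), those
of the third or fourth slot one instance of (R3), and those of the last slot, where every `θ`
occurs inside some `D`, are (R3) antisymmetrised in its last two arguments. Multiplicativity
of the twist is (R1).
-/

namespace HomLieTripleSystem

variable {K T V : Type*} [CommRing K] [AddCommGroup T] [Module K T] [AddCommGroup V] [Module K V]

def semidirectBracket (brT : T →ₗ[K] T →ₗ[K] T →ₗ[K] T) (θ : T →ₗ[K] T →ₗ[K] V →ₗ[K] V)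
    (p q r : T × V) : T × V :=
  (brT p.1 q.1 r.1, θ q.1 r.1 p.2 - θ p.1 r.1 q.2 + (θ q.1 p.1 r.2 - θ p.1 q.1 r.2))

variable (brT : T →ₗ[K] T →ₗ[K] T →ₗ[K] T) (θ : T →ₗ[K] T →ₗ[K] V →ₗ[K] V)

@[simp]
lemma fst_semidirectBracket (p q r : T × V) :
    (semidirectBracket brT θ p q r).1 = brT p.1 q.1 r.1 :=
  rfl

@[simp]
lemma snd_semidirectBracket (p q r : T × V) :
    (semidirectBracket brT θ p q r).2 =
      θ q.1 r.1 p.2 - θ p.1 r.1 q.2 + (θ q.1 p.1 r.2 - θ p.1 q.1 r.2) :=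
  rfl

lemma isLinearMap_semidirectBracket_left (q r : T × V) :
    IsLinearMap K fun p => semidirectBracket brT θ p q r := by
  constructor <;> intros <;> ext <;> simp <;> module

lemma isLinearMap_semidirectBracket_middle (p r : T × V) :
    IsLinearMap K fun q => semidirectBracket brT θ p q r := by
  constructor <;> intros <;> ext <;> simp <;> module

lemma isLinearMap_semidirectBracket_right (p q : T × V) :
    IsLinearMap K fun r => semidirectBracket brT θ p q r := by
  constructor <;> intros <;> ext <;> simp <;> module

lemma semidirectBracket_self_left (hT1 : ∀ a c, brT a a c = 0) (p q : T × V) :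
    semidirectBracket brT θ p p q = 0 := by
  ext <;> simp [hT1]

lemma semidirectBracket_cyclic (hT2 : ∀ a b c, brT a b c + brT b c a + brT c a b = 0)
    (p q r : T × V) :
    semidirectBracket brT θ p q r + semidirectBracket brT θ q r p +
      semidirectBracket brT θ r p q = 0 := by
  ext
  · exact hT2 p.1 q.1 r.1
  · simp only [Prod.snd_add, snd_semidirectBracket, Prod.snd_zero]
    abel

variable (α : T →ₗ[K] T) (A : V →ₗ[K] V)

lemma semidirectBracket_fundamentalIdentity
    (hT3 : ∀ a b c d e, brT (α a) (α b) (brT c d e) =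
      brT (brT a b c) (α d) (α e) + brT (α c) (brT a b d) (α e) +
        brT (α c) (α d) (brT a b e))
    (hR2 : ∀ a b c d v,
      θ (α c) (α d) (θ a b v) - θ (α b) (α d) (θ a c v) -
          θ (α a) (brT b c d) (A v) +
        (θ (α c) (α b) (θ a d v) - θ (α b) (α c) (θ a d v)) = 0)
    (hR3 : ∀ a b c d v,
      θ (α c) (α d) (θ b a v - θ a b v) -
          (θ (α b) (α a) (θ c d v) - θ (α a) (α b) (θ c d v)) +
        θ (brT a b c) (α d) (A v) + θ (α c) (brT a b d) (A v) = 0)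
    (p q r s t : T × V) :
    semidirectBracket brT θ (Prod.map α A p) (Prod.map α A q) (semidirectBracket brT θ r s t) =
      semidirectBracket brT θ (semidirectBracket brT θ p q r) (Prod.map α A s) (Prod.map α A t) +
        semidirectBracket brT θ (Prod.map α A r) (semidirectBracket brT θ p q s) (Prod.map α A t) +
        semidirectBracket brT θ (Prod.map α A r) (Prod.map α A s)
          (semidirectBracket brT θ p q t) := by
  rcases p with ⟨a, u⟩; rcases q with ⟨b, v⟩; rcases r with ⟨c, w⟩
  rcases s with ⟨d, x⟩; rcases t with ⟨e, y⟩
  ext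
  · exact hT3 a b c d e
  · have hu := hR2 b c d e u
    have hv := hR2 a c d e v
    have hw := hR3 a b d e w
    have hx := hR3 a b c e x
    have hy := hR3 a b c d y
    have hy' := hR3 a b d c y
    simp only [map_sub] at hw hx hy hy'
    simp only [Prod.snd_add, snd_semidirectBracket, fst_semidirectBracket, Prod.map_fst,
      Prod.map_snd, map_add, map_sub]
    linear_combination (norm := module) -hu + hv - hw + hx + hy - hy'

lemma prodMap_semidirectBracket (hTmul : ∀ a b c, α (brT a b c) = brT (α a) (α b) (α c))
    (hR1 : ∀ a b v, θ (α a) (α b) (A v) = A (θ a b v)) (p q r : T × V) :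
    Prod.map α A (semidirectBracket brT θ p q r) =
      semidirectBracket brT θ (Prod.map α A p) (Prod.map α A q) (Prod.map α A r) := by
  ext <;> simp [hTmul, hR1]

lemma semidirectBracket_inl (a b c : T) :
    semidirectBracket brT θ (a, (0 : V)) (b, 0) (c, 0) = (brT a b c, 0) := by
  ext <;> simp

lemma fst_semidirectBracket_eq_zero {p q r : T × V} (h : p.1 = 0 ∨ q.1 = 0 ∨ r.1 = 0) :
    (semidirectBracket brT θ p q r).1 = 0 := by
  rcases h with h | h | h <;> simp [h]

lemma semidirectBracket_eq_zero {p q r : T × V}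
    (h : (p.1 = 0 ∧ q.1 = 0) ∨ (p.1 = 0 ∧ r.1 = 0) ∨ (q.1 = 0 ∧ r.1 = 0)) :
    semidirectBracket brT θ p q r = 0 := by
  rcases h with ⟨h, h'⟩ | ⟨h, h'⟩ | ⟨h, h'⟩ <;> ext <;> simp [h, h']

end HomLieTripleSystem

open HomLieTripleSystem

/-- Let `(T, brT, α)` be a multiplicative Hom Lie triple system over a
field `K`, `V` a `K`-vector space, `A ∈ End(V)` and `θ : T×T → End(V)` a bilinear map
satisfying (R1), (R2), (R3) (with `D(a,b) = θ(b,a) − θ(a,b)`).  Then `E_V = T ⊕ V` is a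
multiplicative Hom Lie triple system under
`[(a,u),(b,v),(c,w)] = ([a,b,c], θ(b,c)u − θ(a,c)v + D(a,b)w)` and the twist
`β(a,u) = (α a, A u)`; moreover `T ≅ T ⊕ 0` is a Hom Lts subsystem, the bracket lies in
`V` whenever one argument lies in `V`, and vanishes whenever two arguments lie in `V`. -/
theorem stmt1 {K : Type*} [Field K] {T V : Type*}
    [AddCommGroup T] [Module K T] [AddCommGroup V] [Module K V]
    -- `T` is a multiplicative Hom Lie triple system
    (brT : T →ₗ[K] T →ₗ[K] T →ₗ[K] T) (α : T →ₗ[K] T)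
    (hT1 : ∀ a c, brT a a c = 0)
    (hT2 : ∀ a b c, brT a b c + brT b c a + brT c a b = 0)
    (hT3 : ∀ a b c d e, brT (α a) (α b) (brT c d e) =
      brT (brT a b c) (α d) (α e) + brT (α c) (brT a b d) (α e) +
        brT (α c) (α d) (brT a b e))
    (hTmul : ∀ a b c, α (brT a b c) = brT (α a) (α b) (α c))
    -- the representation data `(V, θ, A)`
    (A : V →ₗ[K] V) (θ : T →ₗ[K] T →ₗ[K] V →ₗ[K] V)
    (hR1 : ∀ a b v, θ (α a) (α b) (A v) = A (θ a b v))
    (hR2 : ∀ a b c d v,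
      θ (α c) (α d) (θ a b v) - θ (α b) (α d) (θ a c v) -
          θ (α a) (brT b c d) (A v) +
        (θ (α c) (α b) (θ a d v) - θ (α b) (α c) (θ a d v)) = 0)
    (hR3 : ∀ a b c d v,
      θ (α c) (α d) (θ b a v - θ a b v) -
          (θ (α b) (α a) (θ c d v) - θ (α a) (α b) (θ c d v)) +
        θ (brT a b c) (α d) (A v) + θ (α c) (brT a b d) (A v) = 0)
    -- the bracket and twist on `E_V = T ⊕ V`
    (brE : T × V → T × V → T × V → T × V)
    (hbrE : ∀ p q r, brE p q r =
      (brT p.1 q.1 r.1,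
        θ q.1 r.1 p.2 - θ p.1 r.1 q.2 + (θ q.1 p.1 r.2 - θ p.1 q.1 r.2)))
    (β : T × V → T × V) (hβ : ∀ p, β p = (α p.1, A p.2)) :
    -- `E_V` is a multiplicative Hom Lie triple system
    (∀ q r, IsLinearMap K fun p => brE p q r) ∧
    (∀ p r, IsLinearMap K fun q => brE p q r) ∧
    (∀ p q, IsLinearMap K fun r => brE p q r) ∧
    (∀ p q, brE p p q = 0) ∧
    (∀ p q r, brE p q r + brE q r p + brE r p q = 0) ∧
    (∀ p q r u w, brE (β p) (β q) (brE r u w) =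
      brE (brE p q r) (β u) (β w) + brE (β r) (brE p q u) (β w) +
        brE (β r) (β u) (brE p q w)) ∧
    (∀ p q r, β (brE p q r) = brE (β p) (β q) (β r)) ∧
    -- `T ≅ T ⊕ 0` is a Hom Lie triple subsystem
    (∀ a b c : T, brE (a, (0 : V)) (b, 0) (c, 0) = (brT a b c, 0)) ∧
    (∀ a : T, β (a, (0 : V)) = (α a, 0)) ∧
    -- the bracket lies in `V` whenever one argument lies in `V`
    (∀ p q r : T × V, (p.1 = 0 ∨ q.1 = 0 ∨ r.1 = 0) → (brE p q r).1 = 0) ∧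
    -- and vanishes whenever two arguments lie in `V`
    (∀ p q r : T × V,
      ((p.1 = 0 ∧ q.1 = 0) ∨ (p.1 = 0 ∧ r.1 = 0) ∨ (q.1 = 0 ∧ r.1 = 0)) →
        brE p q r = 0) := by
  obtain rfl : brE = semidirectBracket brT θ := funext₃ hbrE
  obtain rfl : β = Prod.map α A := funext hβ
  exact ⟨isLinearMap_semidirectBracket_left brT θ,
    isLinearMap_semidirectBracket_middle brT θ,
    isLinearMap_semidirectBracket_right brT θ,
    semidirectBracket_self_left brT θ hT1,
    semidirectBracket_cyclic brT θ hT2,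
    semidirectBracket_fundamentalIdentity brT θ α A hT3 hR2 hR3,
    prodMap_semidirectBracket brT θ α A hTmul hR1,
    semidirectBracket_inl brT θ,
    fun _ => by simp,
    fun _ _ _ => fst_semidirectBracket_eq_zero brT θ,
    fun _ _ _ => semidirectBracket_eq_zero brT θ⟩
end

section
/- Let (T,[·,·,·],α) be a multiplicative Hom Lie triple system over a field k, V a k-vector space and A ∈ End(V). Suppose E_V = T ⊕ V carries a multiplicative Hom Lie triple system structure with twist map β satisfying β|_T = α and β|_V = A, such that T is a Hom Lie triple subsystem of E_V, the bracket [a,b,c] lies in V whenever one of a,b,c lies in V, and [a,b,c] = 0 whenever two of a,b,c lie in V. Then the bilinear map θ : T×T → End(V) defined by θ(a,b)(v) = [v,a,b] satisfies identities (R1), (R2) and (R3). -/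
/-- Let `(T, brT, α)` be a multiplicative Hom Lie triple system over a
field `K`, `V` a `K`-vector space and `A ∈ End(V)`.  Suppose `E_V = T ⊕ V` carries a
multiplicative Hom Lie triple system structure `brE` with twist `β`, `β|_T = α`,
`β|_V = A`, such that `T` is a Hom Lts subsystem, the bracket lies in `V` whenever one
argument lies in `V`, and vanishes whenever two arguments lie in `V`.  Then the bilinear
map `θ(a,b)(v) = [v,a,b]` satisfies the identities (R1), (R2) and (R3) (with
`D(a,b) = θ(b,a) − θ(a,b)` and `[·,·,·]` the induced bracket on `T`). -/
theorem stmt2 {K : Type*} [Field K] {T V : Type*}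
    [AddCommGroup T] [Module K T] [AddCommGroup V] [Module K V]
    (α : T →ₗ[K] T) (A : V →ₗ[K] V)
    -- the multiplicative Hom Lts structure on `E_V = T ⊕ V`, with `β|_T = α`, `β|_V = A`
    (brE : T × V →ₗ[K] T × V →ₗ[K] T × V →ₗ[K] T × V)
    (β : T × V → T × V) (hβ : ∀ p, β p = (α p.1, A p.2))
    (hE1 : ∀ p q, brE p p q = 0)
    (hE2 : ∀ p q r, brE p q r + brE q r p + brE r p q = 0)
    (hE3 : ∀ p q r u w, brE (β p) (β q) (brE r u w) =
      brE (brE p q r) (β u) (β w) + brE (β r) (brE p q u) (β w) +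
        brE (β r) (β u) (brE p q w))
    (hEmul : ∀ p q r, β (brE p q r) = brE (β p) (β q) (β r))
    -- `T` is a Hom Lie triple subsystem of `E_V`
    (hsub : ∀ a b c : T, (brE (a, (0 : V)) (b, 0) (c, 0)).2 = 0)
    -- the bracket lies in `V` whenever one argument lies in `V`
    (honeV : ∀ p q r : T × V, (p.1 = 0 ∨ q.1 = 0 ∨ r.1 = 0) → (brE p q r).1 = 0)
    -- and vanishes whenever two arguments lie in `V`
    (htwoV : ∀ p q r : T × V,
      ((p.1 = 0 ∧ q.1 = 0) ∨ (p.1 = 0 ∧ r.1 = 0) ∨ (q.1 = 0 ∧ r.1 = 0)) →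
        brE p q r = 0)
    -- the induced bracket on `T` and the bilinear map `θ(a,b)(v) = [v,a,b]`
    (brT : T → T → T → T)
    (hbrT : ∀ a b c, brT a b c = (brE (a, (0 : V)) (b, 0) (c, 0)).1)
    (θ : T → T → V → V)
    (hθ : ∀ a b v, θ a b v = (brE ((0 : T), v) (a, 0) (b, 0)).2) :
    -- (R1)
    (∀ a b v, θ (α a) (α b) (A v) = A (θ a b v)) ∧
    -- (R2)
    (∀ a b c d v,
      θ (α c) (α d) (θ a b v) - θ (α b) (α d) (θ a c v) -
          θ (α a) (brT b c d) (A v) +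
        (θ (α c) (α b) (θ a d v) - θ (α b) (α c) (θ a d v)) = 0) ∧
    -- (R3)
    (∀ a b c d v,
      θ (α c) (α d) (θ b a v - θ a b v) -
          (θ (α b) (α a) (θ c d v) - θ (α a) (α b) (θ c d v)) +
        θ (brT a b c) (α d) (A v) + θ (α c) (brT a b d) (A v) = 0) := by

  have hβT : ∀ a : T, β (a, (0:V)) = (α a, (0:V)) := by
    intro a; rw [hβ]; simp
  have hβV : ∀ v : V, β ((0:T), v) = ((0:T), A v) := by
    intro v; rw [hβ]; simp
  have hanti : ∀ p q r : T × V, brE q p r = - brE p q r := by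
    intro p q r
    have h := hE1 (p + q) r
    simp only [map_add, LinearMap.add_apply, hE1, zero_add, add_zero] at h
    rw [← sub_eq_zero, ← h]; abel
  have hmixθ : ∀ (a b : T) (v : V),
      brE ((0:T), v) (a, (0:V)) (b, (0:V)) = ((0:T), θ a b v) := by
    intro a b v
    exact Prod.ext (honeV _ _ _ (Or.inl rfl)) ((hθ a b v).symm)
  have hT : ∀ a b c : T, brE (a, (0:V)) (b, (0:V)) (c, (0:V)) = (brT a b c, (0:V)) := by
    intro a b c
    exact Prod.ext (hbrT a b c).symm (hsub a b c)
  have hmix3 : ∀ (a b : T) (v : V),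
      brE (a, (0:V)) ((0:T), v) (b, (0:V)) = ((0:T), - θ a b v) := by
    intro a b v
    rw [hanti ((0:T), v) (a, (0:V)), hmixθ]
    exact Prod.ext (by simp) rfl
  have hmix2 : ∀ (a b : T) (v : V),
      brE (a, (0:V)) (b, (0:V)) ((0:T), v) = ((0:T), θ b a v - θ a b v) := by
    intro a b v
    have h := hE2 (a, (0:V)) (b, (0:V)) ((0:T), v)
    rw [hanti ((0:T), v) (b, (0:V)) (a, (0:V)), hmixθ, hmixθ] at h
    rw [← sub_eq_zero]
    have e : (((0:T), θ b a v - θ a b v) : T × V) = (((0:T), θ b a v) : T × V) - ((0:T), θ a b v) := by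
      exact Prod.ext (by simp) rfl
    rw [e, ← h]; abel
  refine ⟨?_, ?_, ?_⟩
  · intro a b v
    have h := hEmul ((0:T), v) (a, (0:V)) (b, (0:V))
    rw [hmixθ, hβV, hβV, hβT, hβT, hmixθ] at h
    exact (congrArg Prod.snd h).symm
  · intro a b c d v
    have h := hE3 ((0:T), v) (a, (0:V)) (b, (0:V)) (c, (0:V)) (d, (0:V))
    rw [hβV, hβT a, hβT b, hβT c, hβT d, hT b c d, hmixθ a b v, hmixθ a c v,
      hmixθ a d v, hmixθ (α a) (brT b c d) (A v), hmixθ (α c) (α d),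
      hmix3 (α b) (α d), hmix2 (α b) (α c)] at h
    have h2 := congrArg Prod.snd h
    simp only [Prod.snd_add] at h2
    rw [h2]; abel
  · intro a b c d v
    have h := hE3 (a, (0:V)) (b, (0:V)) ((0:T), v) (c, (0:V)) (d, (0:V))
    rw [hβT a, hβT b, hβV v, hβT c, hβT d, hmixθ c d v, hmix2 a b v, hT a b c,
      hT a b d, hmix2 (α a) (α b), hmixθ (α c) (α d),
      hmixθ (brT a b c) (α d), hmixθ (α c) (brT a b d)] at h
    have h2 := congrArg Prod.snd h
    simp only [Prod.snd_add] at h2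
    rw [h2]; abel
end

section
/- Let (T,[·,·,·],α) be a multiplicative Hom Lie triple system with an action of a group G, and let (V,θ,A) be a G-module over T. If c is an invariant (2n−1)-cochain, i.e. c ∈ C^{2n−1}_{G(α,A)}(T;V), then δ^{2n−1}(c) is an invariant (2n+1)-cochain, i.e. δ^{2n−1}(c) ∈ C^{2n+1}_{G(α,A)}(T;V). Consequently the invariant cochains form a subcomplex (C^{*}_{G(α,A)}(T;V), δ). -/
/-- A `(2m+1)`-cochain of the Hom Lie triple system `(T, α)` with coefficients in
`(V, θ, A)`: a multilinear map `f : T^{2m+1} → V` such that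
`A f(x₁,…,x_{2m+1}) = f(α x₁,…,α x_{2m+1})`, `f(x₁,…,x_{2m−2},x,x,y) = 0` and
`f(x₁,…,x,y,z) + f(x₁,…,y,z,x) + f(x₁,…,z,x,y) = 0` (the last two conditions concern
the final three arguments and apply when `m ≥ 1`). -/
def IsHomLtsCochain (K : Type*) {T V : Type*} [Field K]
    [AddCommGroup T] [Module K T] [AddCommGroup V] [Module K V]
    (α : T → T) (A : V → V) (m : ℕ) (f : (Fin (2*m+1) → T) → V) : Prop :=
  (∀ (x : Fin (2*m+1) → T) (i : Fin (2*m+1)) (c : K) (u v : T),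
      f (Function.update x i (c • u + v)) =
        c • f (Function.update x i u) + f (Function.update x i v)) ∧
  (∀ x, A (f x) = f fun i => α (x i)) ∧
  (∀ x : Fin (2*m+1) → T, 1 ≤ m →
      x ⟨2*m-2, by omega⟩ = x ⟨2*m-1, by omega⟩ → f x = 0) ∧
  (∀ x : Fin (2*m+1) → T, 1 ≤ m →
      f x +
        f (fun i => if i.val = 2*m-2 then x ⟨2*m-1, by omega⟩
            else if i.val = 2*m-1 then x ⟨2*m, by omega⟩
            else if i.val = 2*m then x ⟨2*m-2, by omega⟩ else x i) +
        f (fun i => if i.val = 2*m-2 then x ⟨2*m, by omega⟩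
            else if i.val = 2*m-1 then x ⟨2*m-2, by omega⟩
            else if i.val = 2*m then x ⟨2*m-1, by omega⟩ else x i) = 0)

/-- The coboundary operator `δ^{2m+1} : C^{2m+1}_{α,A}(T;V) → C^{2m+3}_{α,A}(T;V)` of the
Hom Lie triple system cochain complex (the paper's `δ^{2n−1}` with `n = m + 1`), where
`D(a,b) = θ(b,a) − θ(a,b)` and positions are 1-based. -/
noncomputable def homLtsCoboundary (K : Type*) {T V : Type*} [Field K]
    [AddCommGroup T] [Module K T] [AddCommGroup V] [Module K V]
    (br : T → T → T → T) (α : T → T) (θ : T → T → V → V)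
    (m : ℕ) (f : (Fin (2*m+1) → T) → V) :
    (Fin (2*m+3) → T) → V := fun x =>
  let N : ℕ := m + 1
  let X : ℕ → T := fun p => if h : p - 1 < 2*m+3 then x ⟨p-1, h⟩ else 0
  let D : T → T → V → V := fun a b v => θ b a v - θ a b v
  θ (α^[N-1] (X (2*N))) (α^[N-1] (X (2*N+1))) (f fun i => X (i.val+1))
    - θ (α^[N-1] (X (2*N-1))) (α^[N-1] (X (2*N+1)))
        (f fun i => if i.val+1 ≤ 2*N-2 then X (i.val+1) else X (2*N))
    + ∑ k ∈ Finset.Icc 1 N, ((-1 : K))^(k+N) •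
        D (α^[N-1] (X (2*k-1))) (α^[N-1] (X (2*k)))
          (f fun i => X (if i.val+1 ≤ 2*k-2 then i.val+1 else i.val+3))
    + ∑ k ∈ Finset.Icc 1 N, ∑ j ∈ Finset.Icc (2*k+1) (2*N+1),
        ((-1 : K))^(N+k+1) •
          f (fun i =>
            if (if i.val+1 ≤ 2*k-2 then i.val+1 else i.val+3) = j
            then br (X (2*k-1)) (X (2*k)) (X j)
            else α (X (if i.val+1 ≤ 2*k-2 then i.val+1 else i.val+3)))

/-- Let `(T, br, α)` be a multiplicative Hom Lie triple system with an
action of a group `G`, and `(V, θ, A)` a `G`-module over `T`.  If `c` is an invariant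
`(2m+1)`-cochain, then `δ c` is an invariant `(2m+3)`-cochain; consequently the
invariant cochains form a subcomplex `(C^*_{G(α,A)}(T;V), δ)`. -/
theorem stmt4 {K T V G : Type*} [Field K]
    [AddCommGroup T] [Module K T] [AddCommGroup V] [Module K V]
    [Group G] [DistribMulAction G T] [SMulCommClass G K T]
    [DistribMulAction G V] [SMulCommClass G K V]
    -- `T` is a `G`-Hom Lie triple system
    (br : T →ₗ[K] T →ₗ[K] T →ₗ[K] T) (α : T →ₗ[K] T)
    (hT1 : ∀ a c, br a a c = 0)
    (hT2 : ∀ a b c, br a b c + br b c a + br c a b = 0)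
    (hT3 : ∀ a b c d e, br (α a) (α b) (br c d e) =
      br (br a b c) (α d) (α e) + br (α c) (br a b d) (α e) +
        br (α c) (α d) (br a b e))
    (hTmul : ∀ a b c, α (br a b c) = br (α a) (α b) (α c))
    (hTact : ∀ (g : G) (a b c : T), g • br a b c = br (g • a) (g • b) (g • c))
    (hTα : ∀ (g : G) (a : T), α (g • a) = g • α a)
    -- `(V, θ, A)` is a `G`-module over `T`
    (A : V →ₗ[K] V) (θ : T →ₗ[K] T →ₗ[K] V →ₗ[K] V)
    (hR1 : ∀ a b v, θ (α a) (α b) (A v) = A (θ a b v))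
    (hR2 : ∀ a b c d v,
      θ (α c) (α d) (θ a b v) - θ (α b) (α d) (θ a c v) -
          θ (α a) (br b c d) (A v) +
        (θ (α c) (α b) (θ a d v) - θ (α b) (α c) (θ a d v)) = 0)
    (hR3 : ∀ a b c d v,
      θ (α c) (α d) (θ b a v - θ a b v) -
          (θ (α b) (α a) (θ c d v) - θ (α a) (α b) (θ c d v)) +
        θ (br a b c) (α d) (A v) + θ (α c) (br a b d) (A v) = 0)
    (hθact : ∀ (g : G) (a b : T) (v : V), θ (g • a) (g • b) (g • v) = g • θ a b v) :
    -- if `c` is an invariant `(2m+1)`-cochain then `δ c` is an invariant cochain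
    ∀ (m : ℕ) (c : (Fin (2*m+1) → T) → V),
      IsHomLtsCochain K (⇑α) (⇑A) m c →
      (∀ (g : G) (x : Fin (2*m+1) → T), c (fun i => g • x i) = g • c x) →
      ∀ (g : G) (x : Fin (2*m+3) → T),
        homLtsCoboundary K (fun a b c => br a b c) (⇑α)
            (fun a b v => θ a b v) m c (fun i => g • x i) =
          g • homLtsCoboundary K (fun a b c => br a b c) (⇑α)
            (fun a b v => θ a b v) m c x := by
  intro m c hc hinv g x
  have hα : ∀ (k : ℕ) (a : T), α^[k] (g • a) = g • α^[k] a := by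
    intro k
    induction k with
    | zero => intro a; simp
    | succ k ih => intro a; simp [Function.iterate_succ_apply', ih, hTα]
  have hX : ∀ p : ℕ, (if h : p - 1 < 2*m+3 then g • x ⟨p-1, h⟩ else (0:T)) =
      g • (if h : p - 1 < 2*m+3 then x ⟨p-1, h⟩ else 0) := by
    intro p; split <;> simp
  have hite : ∀ (P : Prop) [Decidable P] (a b : T),
      (if P then g • a else g • b) = g • (if P then a else b) := by
    intro P _ a b; split <;> rfl
  have hsc : ∀ (e : ℕ) (v : V), ((-1:K))^e • g • v = g • ((-1:K))^e • v := by
    intro e v; exact (smul_comm g _ v).symm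
  simp only [homLtsCoboundary, hX, hα, ← hTact, hTα, hite, hinv, hθact,
    ← smul_sub, hsc, ← Finset.smul_sum, ← smul_add]
end

section
/- Let (T_c,[·,·,·]_c,α_c) with maps i, π and section s be an equivariant central extension of a G-Hom Lts (T,[·,·,·],α) by the G-module (V,0,A). Then the map h : T×T×T → V uniquely determined by i(h(x,y,z)) = [s(x),s(y),s(z)]_c − s([x,y,z]) is a G-invariant 3-cochain in C³_{G(α,A)}(T;V) and satisfies δ³h = 0; hence its class [h] lies in H³_{G(α,A)}(T;V). -/
/-- Let `(T_c, br_c, α_c)` together with `i`, `π` and a section `s` be an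
equivariant central extension of a `G`-Hom Lie triple system `(T, brT, α)` by the
`G`-module `(V, 0, A)`.  Then the map `h : T×T×T → V` determined by
`i(h(x,y,z)) = [s x, s y, s z]_c − s [x,y,z]` is a `G`-invariant 3-cochain in
`C³_{G(α,A)}(T;V)` and satisfies `δ³ h = 0`; hence it defines a class in
`H³_{G(α,A)}(T;V)`. -/
theorem stmt5 {K : Type*} [Field K] {T V Tc G : Type*}
    [AddCommGroup T] [Module K T] [AddCommGroup V] [Module K V]
    [AddCommGroup Tc] [Module K Tc]
    [Group G] [DistribMulAction G T] [SMulCommClass G K T]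
    [DistribMulAction G V] [SMulCommClass G K V]
    [DistribMulAction G Tc] [SMulCommClass G K Tc]
    -- `T` is a `G`-Hom Lie triple system
    (brT : T →ₗ[K] T →ₗ[K] T →ₗ[K] T) (α : T →ₗ[K] T)
    (hT1 : ∀ a c, brT a a c = 0)
    (hT2 : ∀ a b c, brT a b c + brT b c a + brT c a b = 0)
    (hT3 : ∀ a b c d e, brT (α a) (α b) (brT c d e) =
      brT (brT a b c) (α d) (α e) + brT (α c) (brT a b d) (α e) +
        brT (α c) (α d) (brT a b e))
    (hTmul : ∀ a b c, α (brT a b c) = brT (α a) (α b) (α c))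
    (hTact : ∀ (g : G) (a b c : T), g • brT a b c = brT (g • a) (g • b) (g • c))
    (hTα : ∀ (g : G) (a : T), α (g • a) = g • α a)
    -- the `G`-module `(V, 0, A)`
    (A : V →ₗ[K] V) (hAact : ∀ (g : G) (v : V), A (g • v) = g • A v)
    -- `T_c` is a `G`-Hom Lie triple system
    (brC : Tc →ₗ[K] Tc →ₗ[K] Tc →ₗ[K] Tc) (αc : Tc →ₗ[K] Tc)
    (hC1 : ∀ a c, brC a a c = 0)
    (hC2 : ∀ a b c, brC a b c + brC b c a + brC c a b = 0)
    (hC3 : ∀ a b c d e, brC (αc a) (αc b) (brC c d e) =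
      brC (brC a b c) (αc d) (αc e) + brC (αc c) (brC a b d) (αc e) +
        brC (αc c) (αc d) (brC a b e))
    (hCmul : ∀ a b c, αc (brC a b c) = brC (αc a) (αc b) (αc c))
    (hCact : ∀ (g : G) (a b c : Tc), g • brC a b c = brC (g • a) (g • b) (g • c))
    (hCα : ∀ (g : G) (a : Tc), αc (g • a) = g • αc a)
    -- exact sequence of `G`-Hom Lts morphisms `0 → V → T_c → T → 0` with section `s`
    (i : V →ₗ[K] Tc) (π : Tc →ₗ[K] T) (s : T →ₗ[K] Tc)
    (hinj : Function.Injective i) (hsurj : Function.Surjective π)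
    (hexact : LinearMap.range i = LinearMap.ker π)
    (hiα : ∀ v, αc (i v) = i (A v))
    (hiact : ∀ (g : G) (v : V), i (g • v) = g • i v)
    (hπbr : ∀ x y z, π (brC x y z) = brT (π x) (π y) (π z))
    (hπα : ∀ x, π (αc x) = α (π x))
    (hπact : ∀ (g : G) (x : Tc), π (g • x) = g • π x)
    (hsec : ∀ x, π (s x) = x) (hsα : ∀ x, αc (s x) = s (α x))
    (hsact : ∀ (g : G) (x : T), s (g • x) = g • s x)
    -- centrality: `i(V) ⊆ Z(T_c)`
    (hcentral : ∀ (v : V) (y z : Tc), brC (i v) y z = 0)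
    -- the 3-cochain `h`
    (h : T → T → T → V)
    (hh : ∀ x y z, i (h x y z) = brC (s x) (s y) (s z) - s (brT x y z)) :
    (∀ y z, IsLinearMap K fun x => h x y z) ∧
    (∀ x z, IsLinearMap K fun y => h x y z) ∧
    (∀ x y, IsLinearMap K fun z => h x y z) ∧
    (∀ x y z, A (h x y z) = h (α x) (α y) (α z)) ∧
    (∀ x y, h x x y = 0) ∧
    (∀ x y z, h x y z + h y z x + h z x y = 0) ∧
    (∀ (g : G) (x y z : T), h (g • x) (g • y) (g • z) = g • h x y z) ∧
    (∀ x₁ x₂ x₃ x₄ x₅,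
      h (brT x₁ x₂ x₃) (α x₄) (α x₅) + h (α x₃) (brT x₁ x₂ x₄) (α x₅) +
          h (α x₃) (α x₄) (brT x₁ x₂ x₅) -
        h (α x₁) (α x₂) (brT x₃ x₄ x₅) = 0) := by

  have anti : ∀ a b c : Tc, brC b a c = - brC a b c := by
    intro a b c
    have h0 := hC1 (a + b) c
    simp only [map_add, LinearMap.add_apply, hC1, zero_add, add_zero] at h0
    exact eq_neg_of_add_eq_zero_left h0
  have cent2 : ∀ (v : V) (y z : Tc), brC y (i v) z = 0 := by
    intro v y z
    rw [anti (i v) y z, hcentral, neg_zero]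
  have cent3 : ∀ (v : V) (y z : Tc), brC y z (i v) = 0 := by
    intro v y z
    have h0 := hC2 y z (i v)
    rw [cent2, hcentral, add_zero, add_zero] at h0
    exact h0
  have key : ∀ a b c, s (brT a b c) = brC (s a) (s b) (s c) - i (h a b c) := by
    intro a b c; rw [hh]; abel
  refine ⟨?_, ?_, ?_, ?_, ?_, ?_, ?_, ?_⟩
  · intro y z
    refine ⟨fun a b => hinj ?_, fun c a => hinj ?_⟩
    · simp only [map_add, hh, LinearMap.add_apply]
      abel
    · simp only [map_smul, hh, LinearMap.smul_apply, smul_sub]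
  · intro x z
    refine ⟨fun a b => hinj ?_, fun c a => hinj ?_⟩
    · simp only [map_add, hh, LinearMap.add_apply]
      abel
    · simp only [map_smul, hh, LinearMap.smul_apply, smul_sub]
  · intro x y
    refine ⟨fun a b => hinj ?_, fun c a => hinj ?_⟩
    · simp only [map_add, hh, LinearMap.add_apply]
      abel
    · simp only [map_smul, hh, LinearMap.smul_apply, smul_sub]
  · intro x y z
    apply hinj
    rw [← hiα, hh, hh, map_sub, hCmul, hsα, hsα, hsα, hsα, hTmul]
  · intro x y
    apply hinj
    rw [hh, hT1, hC1, map_zero, map_zero, sub_zero]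
  · intro x y z
    apply hinj
    simp only [map_add, hh, map_zero]
    have hT := hT2 x y z
    have hC := hC2 (s x) (s y) (s z)
    have := congrArg s hT
    simp only [map_add, map_zero] at this
    rw [show ∀ a b c d e f : Tc, a - b + (c - d) + (e - f) =
      (a + c + e) - (b + d + f) from fun a b c d e f => by abel, hC, this, sub_zero]
  · intro g x y z
    apply hinj
    rw [hiact, hh, hh, smul_sub, hCact, ← hsact, ← hsact, ← hsact, ← hsact,
      ← hTact]
  · intro x₁ x₂ x₃ x₄ x₅
    apply hinj
    simp only [map_add, map_sub, hh, map_zero]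
    rw [key x₁ x₂ x₃, key x₁ x₂ x₄, key x₁ x₂ x₅, key x₃ x₄ x₅]
    simp only [map_sub, LinearMap.sub_apply, hcentral, cent2, cent3, sub_zero]
    simp only [← hsα]
    rw [hC3 (s x₁) (s x₂) (s x₃) (s x₄) (s x₅), hT3 x₁ x₂ x₃ x₄ x₅]
    simp only [map_add]
    abel
end

section
/- Let (T,[·,·,·],α) be a G-Hom Lts, (V,0,A) a G-module over T with trivial θ = 0, and let h ∈ C³_{G(α,A)}(T;V) be a G-invariant 3-cochain with δ³h = 0. Then T_c := T ⊕ V with the bracket [(x,a),(y,b),(z,c)]_c = ([x,y,z], h(x,y,z)), twist map α_c(x,a) = (α(x), A(a)), and diagonal G-action g·(x,a) = (gx, ga) is a G-Hom Lts, and together with i : V → T_c, a ↦ (0,a), π : T_c → T, (x,a) ↦ x, and section s : T → T_c, x ↦ (x,0), it is an equivariant central extension of T by (V,0,A). -/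
/-- Let `(T, brT, α)` be a `G`-Hom Lie triple system, `(V, 0, A)` a
`G`-module over `T` with trivial `θ = 0`, and `h ∈ C³_{G(α,A)}(T;V)` a `G`-invariant
3-cochain with `δ³ h = 0`.  Then `T_c := T ⊕ V` with bracket
`[(x,a),(y,b),(z,c)]_c = ([x,y,z], h(x,y,z))`, twist `α_c(x,a) = (α x, A a)` and the
diagonal `G`-action is a `G`-Hom Lie triple system, and together with
`i : a ↦ (0,a)`, `π : (x,a) ↦ x` and the section `s : x ↦ (x,0)` it is an equivariant
central extension of `T` by `(V, 0, A)`. -/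
theorem stmt7 {K : Type*} [Field K] {T V G : Type*}
    [AddCommGroup T] [Module K T] [AddCommGroup V] [Module K V]
    [Group G] [DistribMulAction G T] [SMulCommClass G K T]
    [DistribMulAction G V] [SMulCommClass G K V]
    -- `T` is a `G`-Hom Lie triple system
    (brT : T →ₗ[K] T →ₗ[K] T →ₗ[K] T) (α : T →ₗ[K] T)
    (hT1 : ∀ a c, brT a a c = 0)
    (hT2 : ∀ a b c, brT a b c + brT b c a + brT c a b = 0)
    (hT3 : ∀ a b c d e, brT (α a) (α b) (brT c d e) =
      brT (brT a b c) (α d) (α e) + brT (α c) (brT a b d) (α e) +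
        brT (α c) (α d) (brT a b e))
    (hTmul : ∀ a b c, α (brT a b c) = brT (α a) (α b) (α c))
    (hTact : ∀ (g : G) (a b c : T), g • brT a b c = brT (g • a) (g • b) (g • c))
    (hTα : ∀ (g : G) (a : T), α (g • a) = g • α a)
    -- the `G`-module `(V, 0, A)`
    (A : V →ₗ[K] V) (hAact : ∀ (g : G) (v : V), A (g • v) = g • A v)
    -- `h` is a `G`-invariant 3-cocycle
    (h : T → T → T → V)
    (hlin1 : ∀ y z, IsLinearMap K fun x => h x y z)
    (hlin2 : ∀ x z, IsLinearMap K fun y => h x y z)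
    (hlin3 : ∀ x y, IsLinearMap K fun z => h x y z)
    (hA : ∀ x y z, A (h x y z) = h (α x) (α y) (α z))
    (halt : ∀ x y, h x x y = 0)
    (hcyc : ∀ x y z, h x y z + h y z x + h z x y = 0)
    (hinv : ∀ (g : G) (x y z : T), h (g • x) (g • y) (g • z) = g • h x y z)
    (hcocycle : ∀ x₁ x₂ x₃ x₄ x₅,
      h (brT x₁ x₂ x₃) (α x₄) (α x₅) + h (α x₃) (brT x₁ x₂ x₄) (α x₅) +
          h (α x₃) (α x₄) (brT x₁ x₂ x₅) -
        h (α x₁) (α x₂) (brT x₃ x₄ x₅) = 0)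
    -- the data of the extension `T_c = T ⊕ V`
    (brC : T × V → T × V → T × V → T × V)
    (hbrC : ∀ p q r, brC p q r = (brT p.1 q.1 r.1, h p.1 q.1 r.1))
    (αc : T × V → T × V) (hαc : ∀ p, αc p = (α p.1, A p.2))
    (i : V → T × V) (hi : ∀ a, i a = ((0 : T), a))
    (π : T × V → T) (hπ : ∀ p, π p = p.1)
    (s : T → T × V) (hs : ∀ x, s x = (x, (0 : V))) :
    -- `T_c` is a `G`-Hom Lie triple system
    (∀ q r, IsLinearMap K fun p => brC p q r) ∧
    (∀ p r, IsLinearMap K fun q => brC p q r) ∧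
    (∀ p q, IsLinearMap K fun r => brC p q r) ∧
    (∀ p q, brC p p q = 0) ∧
    (∀ p q r, brC p q r + brC q r p + brC r p q = 0) ∧
    (∀ p q r u w, brC (αc p) (αc q) (brC r u w) =
      brC (brC p q r) (αc u) (αc w) + brC (αc r) (brC p q u) (αc w) +
        brC (αc r) (αc u) (brC p q w)) ∧
    (∀ p q r, αc (brC p q r) = brC (αc p) (αc q) (αc r)) ∧
    (∀ (g : G) (p q r : T × V), g • brC p q r = brC (g • p) (g • q) (g • r)) ∧
    (∀ (g : G) (p : T × V), αc (g • p) = g • αc p) ∧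
    -- `0 → V → T_c → T → 0` is an exact sequence of `G`-Hom Lts morphisms
    IsLinearMap K i ∧ IsLinearMap K π ∧ IsLinearMap K s ∧
    Function.Injective i ∧ Function.Surjective π ∧
    (∀ p, π p = 0 ↔ ∃ a, i a = p) ∧
    (∀ a, αc (i a) = i (A a)) ∧
    (∀ (g : G) (a : V), i (g • a) = g • i a) ∧
    (∀ p q r, π (brC p q r) = brT (π p) (π q) (π r)) ∧
    (∀ p, π (αc p) = α (π p)) ∧
    (∀ (g : G) (p : T × V), π (g • p) = g • π p) ∧
    -- `s` is an equivariant section and `i(V)` is central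
    (∀ x, π (s x) = x) ∧
    (∀ x, αc (s x) = s (α x)) ∧
    (∀ (g : G) (x : T), s (g • x) = g • s x) ∧
    (∀ (a : V) (q r : T × V), brC (i a) q r = 0) := by

  have key : ∀ x₁ x₂ x₃ x₄ x₅, h (α x₁) (α x₂) (brT x₃ x₄ x₅) =
      h (brT x₁ x₂ x₃) (α x₄) (α x₅) + h (α x₃) (brT x₁ x₂ x₄) (α x₅) +
        h (α x₃) (α x₄) (brT x₁ x₂ x₅) := by
    intro a b c d e
    have := hcocycle a b c d e
    exact (sub_eq_zero.mp this).symm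
  refine ⟨?_, ?_, ?_, ?_, ?_, ?_, ?_, ?_, ?_, ?_, ?_, ?_, ?_, ?_, ?_, ?_, ?_, ?_, ?_, ?_, ?_, ?_, ?_, ?_⟩
  · intro q r
    exact ⟨fun p p' => by simp [hbrC, (hlin1 _ _).map_add, Prod.ext_iff],
      fun c p => by simp [hbrC, (hlin1 _ _).map_smul, Prod.ext_iff]⟩
  · intro p r
    exact ⟨fun q q' => by simp [hbrC, (hlin2 _ _).map_add, Prod.ext_iff],
      fun c q => by simp [hbrC, (hlin2 _ _).map_smul, Prod.ext_iff]⟩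
  · intro p q
    exact ⟨fun r r' => by simp [hbrC, (hlin3 _ _).map_add, Prod.ext_iff],
      fun c r => by simp [hbrC, (hlin3 _ _).map_smul, Prod.ext_iff]⟩
  · intro p q; simp [hbrC, hT1, halt, Prod.ext_iff]
  · intro p q r; simp [hbrC, hT2, hcyc, Prod.ext_iff]
  · intro p q r u w
    simp only [hbrC, hαc, Prod.mk_add_mk, Prod.ext_iff]
    exact ⟨hT3 _ _ _ _ _, key _ _ _ _ _⟩
  · intro p q r; simp [hbrC, hαc, hTmul, hA, Prod.ext_iff]
  · intro g p q r; simp [hbrC, hTact, hinv, Prod.ext_iff, Prod.smul_def]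
  · intro g p; simp [hαc, hTα, hAact, Prod.ext_iff, Prod.smul_def]
  · exact ⟨fun a b => by simp [hi], fun c a => by simp [hi, Prod.ext_iff]⟩
  · exact ⟨fun p q => by simp [hπ], fun c p => by simp [hπ]⟩
  · exact ⟨fun x y => by simp [hs], fun c x => by simp [hs, Prod.ext_iff]⟩
  · intro a b hab; simpa [hi, Prod.ext_iff] using hab
  · intro x; exact ⟨(x, 0), by simp [hπ]⟩
  · intro p
    constructor
    · intro hp; exact ⟨p.2, by simp [hi, hπ] at hp ⊢; exact Prod.ext hp.symm rfl⟩
    · rintro ⟨a, rfl⟩; simp [hi, hπ]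
  · intro a; simp [hi, hαc]
  · intro g a; simp [hi, Prod.ext_iff, Prod.smul_def]
  · intro p q r; simp [hbrC, hπ]
  · intro p; simp [hαc, hπ]
  · intro g p; simp [hπ, Prod.smul_def]
  · intro x; simp [hs, hπ]
  · intro x; simp [hs, hαc]
  · intro g x; simp [hs, Prod.ext_iff, Prod.smul_def]
  · intro a q r
    simp [hbrC, hi, Prod.ext_iff, (hlin1 q.1 r.1).map_zero]
end

section
/- Let (T,[·,·,·],α) be a G-Hom Lts and (V,0,A) a G-module over T with trivial θ = 0. Let h, h' ∈ C³_{G(α,A)}(T;V) be invariant 3-cocycles that are cohomologous, say (h' − h)(x,y,z) = −f([x,y,z]) for a G-invariant 1-cochain f : T → V (f linear, f∘α = A∘f, f(gx) = g f(x)). Let T_c and T_c' be the equivariant central extensions T ⊕ V built from h and h' respectively, with bracket ([x,y,z], h(x,y,z)) (resp. h'), twist (α(x),A(a)) and diagonal G-action. Then the map φ : T_c → T_c' defined by φ(x,a) = (x, a − f(x)) is a G-equivariant Hom Lts isomorphism giving an equivalence of the two extensions (φ∘i = i' and π'∘φ = π). -/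
/-- Let `(T, brT, α)` be a `G`-Hom Lie triple system and `(V, 0, A)` a
`G`-module over `T` with trivial `θ = 0`.  Let `h, h'` be cohomologous `G`-invariant
3-cocycles, say `(h' − h)(x,y,z) = −f([x,y,z])` for a `G`-invariant 1-cochain `f`.  Then
the map `φ(x,a) = (x, a − f(x))` between the central extensions `T ⊕ V` built from `h`
and `h'` is a `G`-equivariant Hom Lts isomorphism giving an equivalence of the two
extensions (`φ ∘ i = i'` and `π' ∘ φ = π`). -/
theorem stmt8 {K : Type*} [Field K] {T V G : Type*}
    [AddCommGroup T] [Module K T] [AddCommGroup V] [Module K V]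
    [Group G] [DistribMulAction G T] [SMulCommClass G K T]
    [DistribMulAction G V] [SMulCommClass G K V]
    -- `T` is a `G`-Hom Lie triple system
    (brT : T →ₗ[K] T →ₗ[K] T →ₗ[K] T) (α : T →ₗ[K] T)
    (hT1 : ∀ a c, brT a a c = 0)
    (hT2 : ∀ a b c, brT a b c + brT b c a + brT c a b = 0)
    (hT3 : ∀ a b c d e, brT (α a) (α b) (brT c d e) =
      brT (brT a b c) (α d) (α e) + brT (α c) (brT a b d) (α e) +
        brT (α c) (α d) (brT a b e))
    (hTmul : ∀ a b c, α (brT a b c) = brT (α a) (α b) (α c))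
    (hTact : ∀ (g : G) (a b c : T), g • brT a b c = brT (g • a) (g • b) (g • c))
    (hTα : ∀ (g : G) (a : T), α (g • a) = g • α a)
    -- the `G`-module `(V, 0, A)`
    (A : V →ₗ[K] V) (hAact : ∀ (g : G) (v : V), A (g • v) = g • A v)
    -- `h` and `h'` are `G`-invariant 3-cocycles
    (h h' : T → T → T → V)
    (hlin1 : ∀ y z, IsLinearMap K fun x => h x y z)
    (hlin2 : ∀ x z, IsLinearMap K fun y => h x y z)
    (hlin3 : ∀ x y, IsLinearMap K fun z => h x y z)
    (hA : ∀ x y z, A (h x y z) = h (α x) (α y) (α z))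
    (halt : ∀ x y, h x x y = 0)
    (hcyc : ∀ x y z, h x y z + h y z x + h z x y = 0)
    (hinv : ∀ (g : G) (x y z : T), h (g • x) (g • y) (g • z) = g • h x y z)
    (hcocycle : ∀ x₁ x₂ x₃ x₄ x₅,
      h (brT x₁ x₂ x₃) (α x₄) (α x₅) + h (α x₃) (brT x₁ x₂ x₄) (α x₅) +
          h (α x₃) (α x₄) (brT x₁ x₂ x₅) -
        h (α x₁) (α x₂) (brT x₃ x₄ x₅) = 0)
    (hlin1' : ∀ y z, IsLinearMap K fun x => h' x y z)
    (hlin2' : ∀ x z, IsLinearMap K fun y => h' x y z)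
    (hlin3' : ∀ x y, IsLinearMap K fun z => h' x y z)
    (hA' : ∀ x y z, A (h' x y z) = h' (α x) (α y) (α z))
    (halt' : ∀ x y, h' x x y = 0)
    (hcyc' : ∀ x y z, h' x y z + h' y z x + h' z x y = 0)
    (hinv' : ∀ (g : G) (x y z : T), h' (g • x) (g • y) (g • z) = g • h' x y z)
    (hcocycle' : ∀ x₁ x₂ x₃ x₄ x₅,
      h' (brT x₁ x₂ x₃) (α x₄) (α x₅) + h' (α x₃) (brT x₁ x₂ x₄) (α x₅) +
          h' (α x₃) (α x₄) (brT x₁ x₂ x₅) -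
        h' (α x₁) (α x₂) (brT x₃ x₄ x₅) = 0)
    -- `h` and `h'` are cohomologous via the `G`-invariant 1-cochain `f`
    (f : T →ₗ[K] V)
    (hfα : ∀ x, f (α x) = A (f x))
    (hfact : ∀ (g : G) (x : T), f (g • x) = g • f x)
    (hcob : ∀ x y z, h' x y z - h x y z = -f (brT x y z))
    -- the two extensions and the comparison map `φ`
    (brC brC' : T × V → T × V → T × V → T × V)
    (hbrC : ∀ p q r, brC p q r = (brT p.1 q.1 r.1, h p.1 q.1 r.1))
    (hbrC' : ∀ p q r, brC' p q r = (brT p.1 q.1 r.1, h' p.1 q.1 r.1))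
    (αc : T × V → T × V) (hαc : ∀ p, αc p = (α p.1, A p.2))
    (φ : T × V → T × V) (hφ : ∀ p, φ p = (p.1, p.2 - f p.1)) :
    IsLinearMap K φ ∧
    Function.Bijective φ ∧
    (∀ p q r, φ (brC p q r) = brC' (φ p) (φ q) (φ r)) ∧
    (∀ p, φ (αc p) = αc (φ p)) ∧
    (∀ (g : G) (p : T × V), φ (g • p) = g • φ p) ∧
    (∀ a : V, φ ((0 : T), a) = ((0 : T), a)) ∧
    (∀ p : T × V, (φ p).1 = p.1) := by
  refine ⟨⟨fun p q => ?_, fun c p => ?_⟩, ?_, fun p q r => ?_, fun p => ?_,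
    fun g p => ?_, fun a => ?_, fun p => by rw [hφ]⟩
  · simp [hφ, Prod.ext_iff]; abel
  · simp [hφ, Prod.ext_iff, smul_sub]
  · constructor
    · intro p q hpq
      rw [hφ, hφ, Prod.ext_iff] at hpq
      obtain ⟨h1, h2⟩ := hpq
      have := h2
      rw [h1] at this
      exact Prod.ext h1 (by linear_combination (norm := module) this)
    · intro q
      exact ⟨(q.1, q.2 + f q.1), by rw [hφ]; simp⟩
  · rw [hbrC, hbrC', hφ, hφ, hφ, hφ, Prod.ext_iff]
    refine ⟨rfl, ?_⟩
    have := hcob p.1 q.1 r.1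
    simp only []
    linear_combination (norm := module) -this
  · rw [hαc, hφ, hφ, hαc]
    simp [hfα, map_sub]
  · rw [hφ, hφ, Prod.smul_def, Prod.smul_def]
    simp [hfact, smul_sub]
  · rw [hφ]; simp
end

section
/- Let μ_t = Σ_{i≥0} μ_i t^i be an equivariant formal one-parameter deformation of a G-Hom Lts (T,[·,·,·],α). Then the infinitesimal μ₁ is a 3-cocycle in the equivariant complex C³_{G(α)}(T); more generally, if μ_i = 0 for 1 ≤ i ≤ n−1 and μ_n ≠ 0 (the n-infinitesimal), then μ_n is a 3-cocycle in C³_{G(α)}(T), i.e. δ³μ_n = 0 with respect to the adjoint representation. -/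
/-- Let `μ_t = Σ μ_i t^i` be an equivariant formal one-parameter
deformation of a `G`-Hom Lie triple system `(T, brT, α)`.  Then the infinitesimal `μ₁`
is a 3-cocycle in `C³_{G(α)}(T)`; more generally, if `μ_i = 0` for `1 ≤ i ≤ n−1` and
`μ_n ≠ 0`, then the `n`-infinitesimal `μ_n` is a 3-cocycle, i.e. `δ³ μ_n = 0` with
respect to the adjoint representation. -/
theorem stmt9 {K : Type*} [Field K] {T G : Type*}
    [AddCommGroup T] [Module K T]
    [Group G] [DistribMulAction G T] [SMulCommClass G K T]
    -- `T` is a `G`-Hom Lie triple system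
    (brT : T →ₗ[K] T →ₗ[K] T →ₗ[K] T) (α : T →ₗ[K] T)
    (hT1 : ∀ a c, brT a a c = 0)
    (hT2 : ∀ a b c, brT a b c + brT b c a + brT c a b = 0)
    (hT3 : ∀ a b c d e, brT (α a) (α b) (brT c d e) =
      brT (brT a b c) (α d) (α e) + brT (α c) (brT a b d) (α e) +
        brT (α c) (α d) (brT a b e))
    (hTmul : ∀ a b c, α (brT a b c) = brT (α a) (α b) (α c))
    (hTact : ∀ (g : G) (a b c : T), g • brT a b c = brT (g • a) (g • b) (g • c))
    (hTα : ∀ (g : G) (a : T), α (g • a) = g • α a)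
    -- `μ` is an equivariant formal one-parameter deformation of `T`
    (μ : ℕ → T →ₗ[K] T →ₗ[K] T →ₗ[K] T)
    (hμ0 : μ 0 = brT)
    (hequiv : ∀ (i : ℕ) (g : G) (a b c : T),
      μ i (g • a) (g • b) (g • c) = g • μ i a b c)
    (hd0 : ∀ r a b c, μ r (α a) (α b) (α c) = α (μ r a b c))
    (hd1 : ∀ r a b, μ r a a b = 0)
    (hd2 : ∀ r a b c, μ r a b c + μ r b c a + μ r c a b = 0)
    (hd3 : ∀ r a b c d e,
      ∑ i ∈ Finset.range (r + 1), μ i (α a) (α b) (μ (r - i) c d e) =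
        ∑ i ∈ Finset.range (r + 1),
          (μ i (μ (r - i) a b c) (α d) (α e) + μ i (α c) (μ (r - i) a b d) (α e) +
            μ i (α c) (α d) (μ (r - i) a b e))) :
    -- the infinitesimal `μ₁` is a 3-cocycle
    (∀ x₁ x₂ x₃ x₄ x₅,
      brT (μ 1 x₁ x₂ x₃) (α x₄) (α x₅) - brT (μ 1 x₁ x₂ x₄) (α x₃) (α x₅) -
            brT (α x₁) (α x₂) (μ 1 x₃ x₄ x₅) + brT (α x₃) (α x₄) (μ 1 x₁ x₂ x₅) +
          μ 1 (brT x₁ x₂ x₃) (α x₄) (α x₅) + μ 1 (α x₃) (brT x₁ x₂ x₄) (α x₅) +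
          μ 1 (α x₃) (α x₄) (brT x₁ x₂ x₅) -
        μ 1 (α x₁) (α x₂) (brT x₃ x₄ x₅) = 0) ∧
    -- more generally, the `n`-infinitesimal `μ_n` is a 3-cocycle
    (∀ n : ℕ, 1 ≤ n → (∀ i, 1 ≤ i → i < n → μ i = 0) → μ n ≠ 0 →
      ∀ x₁ x₂ x₃ x₄ x₅,
        brT (μ n x₁ x₂ x₃) (α x₄) (α x₅) - brT (μ n x₁ x₂ x₄) (α x₃) (α x₅) -
              brT (α x₁) (α x₂) (μ n x₃ x₄ x₅) + brT (α x₃) (α x₄) (μ n x₁ x₂ x₅) +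
            μ n (brT x₁ x₂ x₃) (α x₄) (α x₅) + μ n (α x₃) (brT x₁ x₂ x₄) (α x₅) +
            μ n (α x₃) (α x₄) (brT x₁ x₂ x₅) -
          μ n (α x₁) (α x₂) (brT x₃ x₄ x₅) = 0) := by

  -- skew-symmetry of `brT` in the first two arguments
  have hskew : ∀ a b c : T, brT a b c = - brT b a c := by
    intro a b c
    have h : brT (a + b) (a + b) c = 0 := hT1 _ _
    simp only [map_add, LinearMap.add_apply, hT1, zero_add, add_zero] at h
    exact eq_neg_of_add_eq_zero_right h
  -- the key general statement
  have key : ∀ n : ℕ, 1 ≤ n → (∀ i, 1 ≤ i → i < n → μ i = 0) →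
      ∀ x₁ x₂ x₃ x₄ x₅,
        brT (μ n x₁ x₂ x₃) (α x₄) (α x₅) - brT (μ n x₁ x₂ x₄) (α x₃) (α x₅) -
              brT (α x₁) (α x₂) (μ n x₃ x₄ x₅) + brT (α x₃) (α x₄) (μ n x₁ x₂ x₅) +
            μ n (brT x₁ x₂ x₃) (α x₄) (α x₅) + μ n (α x₃) (brT x₁ x₂ x₄) (α x₅) +
            μ n (α x₃) (α x₄) (brT x₁ x₂ x₅) -
          μ n (α x₁) (α x₂) (brT x₃ x₄ x₅) = 0 := by
    intro n hn hvan x₁ x₂ x₃ x₄ x₅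
    -- reduce sums over range (n+1) to the first and last term
    have haux : ∀ f : ℕ → T, (∀ i, 1 ≤ i → i < n → f i = 0) →
        ∑ i ∈ Finset.range (n + 1), f i = f 0 + f n := by
      intro f hf
      have hsub : ({0, n} : Finset ℕ) ⊆ Finset.range (n + 1) := by
        intro x hx
        simp only [Finset.mem_insert, Finset.mem_singleton] at hx
        simp only [Finset.mem_range]
        omega
      have hz : ∀ x ∈ Finset.range (n + 1), x ∉ ({0, n} : Finset ℕ) → f x = 0 := by
        intro x hx hx'
        simp only [Finset.mem_range] at hx
        simp only [Finset.mem_insert, Finset.mem_singleton, not_or] at hx'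
        exact hf x (by omega) (by omega)
      rw [← Finset.sum_subset hsub hz, Finset.sum_pair (by omega : (0 : ℕ) ≠ n)]
    have heq := hd3 n x₁ x₂ x₃ x₄ x₅
    rw [haux _ (fun i h1 h2 => by rw [hvan i h1 h2]; simp),
        haux _ (fun i h1 h2 => by rw [hvan i h1 h2]; simp [hvan i h1 h2])] at heq
    simp only [Nat.sub_zero, Nat.sub_self, hμ0] at heq
    rw [hskew (α x₃) (μ n x₁ x₂ x₄) (α x₅)] at heq
    -- heq : A + B = C1 + (-C2) + C3 + (C4 + C5 + C6)
    have step : brT (μ n x₁ x₂ x₃) (α x₄) (α x₅) - brT (μ n x₁ x₂ x₄) (α x₃) (α x₅) -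
              brT (α x₁) (α x₂) (μ n x₃ x₄ x₅) + brT (α x₃) (α x₄) (μ n x₁ x₂ x₅) +
            μ n (brT x₁ x₂ x₃) (α x₄) (α x₅) + μ n (α x₃) (brT x₁ x₂ x₄) (α x₅) +
            μ n (α x₃) (α x₄) (brT x₁ x₂ x₅) -
          μ n (α x₁) (α x₂) (brT x₃ x₄ x₅)
        = (brT (μ n x₁ x₂ x₃) (α x₄) (α x₅) + -brT (μ n x₁ x₂ x₄) (α x₃) (α x₅) +
            brT (α x₃) (α x₄) (μ n x₁ x₂ x₅) +
            (μ n (brT x₁ x₂ x₃) (α x₄) (α x₅) + μ n (α x₃) (brT x₁ x₂ x₄) (α x₅) +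
              μ n (α x₃) (α x₄) (brT x₁ x₂ x₅))) -
          (brT (α x₁) (α x₂) (μ n x₃ x₄ x₅) + μ n (α x₁) (α x₂) (brT x₃ x₄ x₅)) := by
      abel
    rw [step, ← heq, sub_self]
  refine ⟨?_, fun n hn hvan _ => key n hn hvan⟩
  intro x₁ x₂ x₃ x₄ x₅
  exact key 1 le_rfl (fun i h1 h2 => absurd (lt_of_le_of_lt h1 h2) (lt_irrefl 1)) x₁ x₂ x₃ x₄ x₅
end

section
/- Let μ_t = Σ_{i=0}^{n} μ_i t^i be an equivariant formal one-parameter deformation of order n of a G-Hom Lts (T,[·,·,·],α). Then the (n+1)-th obstruction cochain Ob_{n+1}(T) = F_{n+1} is a 5-cocycle in the equivariant complex C⁵_{G(α)}(T): δ⁵F_{n+1} = 0. -/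
/-!
Series in `T[[t]]` are modelled by their coefficient sequences `ℕ → T`, and `μ` gives the
bracket `μ_t = Σ μ_i tⁱ` on them. For any skew-symmetric trilinear bracket commuting with a map
`φ`, `δ⁵` of its own Jacobiator vanishes identically. Truncating `μ` above degree `n` keeps every
`μ_i` skew and multiplicative, and the deformation equations then say that the Jacobiator of
`μ_t` at constant series vanishes below degree `n + 1`, where its coefficient is `F_{n+1}`. As
`μ_t` commutes with multiplication by `t`, the same holds at arbitrary series, with `F_{n+1}`
evaluated at their constant terms. So the coefficient of `t^{n+1}` in the vanishing
`δ⁵`-expression of `μ_t` is `δ⁵ F_{n+1}`.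
-/

open Finset

namespace HomLts

section Cauchy

variable {K : Type*} [CommSemiring K] {X Y Z : Type*}
  [AddCommMonoid X] [Module K X] [AddCommMonoid Y] [Module K Y] [AddCommMonoid Z] [Module K Z]

-- The coefficients of `(Σ fᵢ tⁱ)(Σ xⱼ tʲ)`, where `fᵢ` acts on `xⱼ`.
def cauchyApply : (ℕ → X →ₗ[K] Y) →ₗ[K] (ℕ → X) →ₗ[K] ℕ → Y :=
  LinearMap.mk₂ K (fun f x k => ∑ p ∈ antidiagonal k, f p.1 (x p.2))
    (fun f f' x => by ext k; simp [sum_add_distrib])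
    (fun c f x => by ext k; simp [smul_sum])
    (fun f x x' => by ext k; simp [sum_add_distrib])
    (fun c f x => by ext k; simp [smul_sum])

theorem cauchyApply_apply (f : ℕ → X →ₗ[K] Y) (x : ℕ → X) (k : ℕ) :
    cauchyApply f x k = ∑ p ∈ antidiagonal k, f p.1 (x p.2) := rfl

-- Multiplication by `t`.
def shift : (ℕ → X) →+ (ℕ → X) where
  toFun x := fun
    | 0 => 0
    | k + 1 => x k
  map_zero' := by ext k; cases k <;> rfl
  map_add' x y := by ext k; cases k <;> simp

@[simp] theorem shift_apply_zero (x : ℕ → X) : shift x 0 = 0 := rfl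

@[simp] theorem shift_apply_succ (x : ℕ → X) (k : ℕ) : shift x (k + 1) = x k := rfl

theorem single_add_shift (x : ℕ → X) :
    x = Pi.single 0 (x 0) + shift (fun k => x (k + 1)) := by
  ext k; cases k <;> simp

theorem compLeft_single (g : X →ₗ[K] Y) (x : X) :
    g.compLeft ℕ (Pi.single 0 x) = Pi.single 0 (g x) := by
  ext k; rcases k with _ | k <;> simp

theorem compLeft_shift (g : X →ₗ[K] Y) (x : ℕ → X) :
    g.compLeft ℕ (shift x) = shift (g.compLeft ℕ x) := by
  ext k; rcases k with _ | k <;> simp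

theorem cauchyApply_shift_left (f : ℕ → X →ₗ[K] Y) (x : ℕ → X) :
    cauchyApply (shift f) x = shift (cauchyApply f x) := by
  ext k; cases k <;> simp [cauchyApply_apply, Nat.sum_antidiagonal_succ]

theorem cauchyApply_shift_right (f : ℕ → X →ₗ[K] Y) (x : ℕ → X) :
    cauchyApply f (shift x) = shift (cauchyApply f x) := by
  ext k; cases k <;> simp [cauchyApply_apply, Nat.sum_antidiagonal_succ']

theorem cauchyApply_single_right (f : ℕ → X →ₗ[K] Y) (x : X) :
    cauchyApply f (Pi.single 0 x) = fun k => f k x := by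
  ext k
  rw [cauchyApply_apply, sum_eq_single (k, 0)]
  · simp
  · rintro ⟨i, j⟩ hij hne
    have hj : j ≠ 0 := by rintro rfl; simp_all
    simp [hj]
  · simp

theorem cauchyApply_apply_zero (f : ℕ → X →ₗ[K] Y) (x : ℕ → X) :
    cauchyApply f x 0 = f 0 (x 0) := by
  simp [cauchyApply_apply]

theorem cauchyApply_apply_of_left {f : ℕ → X →ₗ[K] Y} {n : ℕ} (hf : ∀ j < n, f j = 0)
    (x : ℕ → X) : cauchyApply f x n = f n (x 0) := by
  rw [cauchyApply_apply, sum_eq_single (n, 0) (fun p hp hne => ?_) (by simp)]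
  obtain ⟨i, j⟩ := p
  simp only [HasAntidiagonal.mem_antidiagonal, ne_eq, Prod.mk.injEq] at hp hne
  rw [hf i (by omega), LinearMap.zero_apply]

theorem cauchyApply_apply_of_right (f : ℕ → X →ₗ[K] Y) {x : ℕ → X} {n : ℕ}
    (hx : ∀ j < n, x j = 0) : cauchyApply f x n = f 0 (x n) := by
  rw [cauchyApply_apply, sum_eq_single (0, n) (fun p hp hne => ?_) (by simp)]
  obtain ⟨i, j⟩ := p
  simp only [HasAntidiagonal.mem_antidiagonal, ne_eq, Prod.mk.injEq] at hp hne
  rw [hx j (by omega), map_zero]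

theorem cauchyApply_apply_eq_zero_of_left {f : ℕ → X →ₗ[K] Y} {n : ℕ}
    (hf : ∀ j < n, f j = 0) (x : ℕ → X) {k : ℕ} (hk : k < n) : cauchyApply f x k = 0 := by
  rw [cauchyApply_apply_of_left (fun j hj => hf j (hj.trans hk)), hf k hk,
    LinearMap.zero_apply]

theorem cauchyApply_apply_eq_zero_of_right (f : ℕ → X →ₗ[K] Y) {x : ℕ → X} {n : ℕ}
    (hx : ∀ j < n, x j = 0) {k : ℕ} (hk : k < n) : cauchyApply f x k = 0 := by
  rw [cauchyApply_apply_of_right f (fun j hj => hx j (hj.trans hk)), hx k hk, map_zero]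

theorem cauchyApply_cauchyApply_flip (f : ℕ → X →ₗ[K] Y →ₗ[K] Z) (x : ℕ → X) (y : ℕ → Y) :
    cauchyApply (cauchyApply f x) y = cauchyApply (cauchyApply (fun p => (f p).flip) y) x := by
  ext k
  simp only [cauchyApply_apply, LinearMap.sum_apply, LinearMap.flip_apply, sum_sigma']
  refine sum_nbij' (fun q => ⟨(q.2.1 + q.1.2, q.2.2), (q.2.1, q.1.2)⟩)
    (fun q => ⟨(q.2.1 + q.1.2, q.2.2), (q.2.1, q.1.2)⟩) ?_ ?_ ?_ ?_ ?_ <;>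
    aesop (add simp [add_assoc, add_comm, add_left_comm])

end Cauchy

section Jacobiator

variable {M : Type*} [AddCommGroup M]

def jacobiator (ν : M → M → M → M) (φ : M → M) (a b c d e : M) : M :=
  ν (φ a) (φ b) (ν c d e) - ν (ν a b c) (φ d) (φ e) - ν (φ c) (ν a b d) (φ e) -
    ν (φ c) (φ d) (ν a b e)

-- The paper's `δ⁵` with adjoint coefficients; on 5-cochains `α^{m-1}` is `φ ∘ φ`.
def coboundary5 (ν : M → M → M → M) (φ : M → M) (F : M → M → M → M → M → M)
    (x₁ x₂ x₃ x₄ x₅ x₆ x₇ : M) : M :=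
  ν (F x₁ x₂ x₃ x₄ x₅) (φ (φ x₆)) (φ (φ x₇)) - ν (F x₁ x₂ x₃ x₄ x₆) (φ (φ x₅)) (φ (φ x₇)) +
    ν (φ (φ x₁)) (φ (φ x₂)) (F x₃ x₄ x₅ x₆ x₇) - ν (φ (φ x₃)) (φ (φ x₄)) (F x₁ x₂ x₅ x₆ x₇) +
    ν (φ (φ x₅)) (φ (φ x₆)) (F x₁ x₂ x₃ x₄ x₇) -
    F (ν x₁ x₂ x₃) (φ x₄) (φ x₅) (φ x₆) (φ x₇) - F (φ x₃) (ν x₁ x₂ x₄) (φ x₅) (φ x₆) (φ x₇) -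
    F (φ x₃) (φ x₄) (ν x₁ x₂ x₅) (φ x₆) (φ x₇) - F (φ x₃) (φ x₄) (φ x₅) (ν x₁ x₂ x₆) (φ x₇) -
    F (φ x₃) (φ x₄) (φ x₅) (φ x₆) (ν x₁ x₂ x₇) + F (φ x₁) (φ x₂) (ν x₃ x₄ x₅) (φ x₆) (φ x₇) +
    F (φ x₁) (φ x₂) (φ x₅) (ν x₃ x₄ x₆) (φ x₇) + F (φ x₁) (φ x₂) (φ x₅) (φ x₆) (ν x₃ x₄ x₇) -
    F (φ x₁) (φ x₂) (φ x₃) (φ x₄) (ν x₅ x₆ x₇)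

theorem coboundary5_jacobiator_eq_zero (ν : M → M → M → M) (φ : M → M)
    (hsub_left : ∀ a b c d, ν (a - b) c d = ν a c d - ν b c d)
    (hsub_right : ∀ a b c d, ν a b (c - d) = ν a b c - ν a b d)
    (hswap : ∀ a b c, ν b a c = -ν a b c)
    (hmul : ∀ a b c, ν (φ a) (φ b) (φ c) = φ (ν a b c)) (x₁ x₂ x₃ x₄ x₅ x₆ x₇ : M) :
    coboundary5 ν φ (jacobiator ν φ) x₁ x₂ x₃ x₄ x₅ x₆ x₇ = 0 := by
  simp only [coboundary5, jacobiator, hsub_left, hsub_right, hmul]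
  rw [hswap (ν (φ x₁) (φ x₂) (ν x₃ x₄ x₆)) (φ (φ x₅)) (φ (φ x₇)),
    hswap (ν (φ x₃) (φ x₄) (ν x₁ x₂ x₆)) (φ (φ x₅)) (φ (φ x₇)),
    hswap (ν (φ x₃) (ν x₁ x₂ x₄) (φ x₆)) (φ (φ x₅)) (φ (φ x₇)),
    hswap (ν (ν x₁ x₂ x₃) (φ x₄) (φ x₆)) (φ (φ x₅)) (φ (φ x₇))]
  abel

end Jacobiator

section FormalBracket

variable {K : Type*} [CommSemiring K] {T : Type*} [AddCommGroup T] [Module K T]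
  (m : ℕ → T →ₗ[K] T →ₗ[K] T →ₗ[K] T) (α : T →ₗ[K] T)

def formalBracket (a b c : ℕ → T) : ℕ → T :=
  cauchyApply (cauchyApply (cauchyApply m a) b) c

theorem formalBracket_single (a b c : T) :
    formalBracket m (Pi.single 0 a) (Pi.single 0 b) (Pi.single 0 c) = fun k => m k a b c := by
  simp only [formalBracket, cauchyApply_single_right]

theorem formalBracket_sub_left (a a' b c : ℕ → T) :
    formalBracket m (a - a') b c = formalBracket m a b c - formalBracket m a' b c := by
  simp only [formalBracket, map_sub, LinearMap.sub_apply]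

theorem formalBracket_sub_right (a b c c' : ℕ → T) :
    formalBracket m a b (c - c') = formalBracket m a b c - formalBracket m a b c' :=
  map_sub _ _ _

theorem formalBracket_swap (halt : ∀ i a c, m i a a c = 0) (a b c : ℕ → T) :
    formalBracket m b a c = -formalBracket m a b c := by
  have hflip : (fun i => (m i).flip) = -m := by
    funext i; ext a b c
    have h := halt i (a + b) c
    simp only [map_add, LinearMap.add_apply, halt, zero_add, add_zero] at h
    simpa using eq_neg_of_add_eq_zero_left h
  rw [formalBracket, formalBracket, cauchyApply_cauchyApply_flip m b a, hflip,
    map_neg cauchyApply m, LinearMap.neg_apply, map_neg, LinearMap.neg_apply, map_neg,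
    LinearMap.neg_apply]

theorem formalBracket_compLeft (hmul : ∀ i a b c, m i (α a) (α b) (α c) = α (m i a b c))
    (a b c : ℕ → T) :
    formalBracket m (α.compLeft ℕ a) (α.compLeft ℕ b) (α.compLeft ℕ c) =
      α.compLeft ℕ (formalBracket m a b c) := by
  ext k
  simp [formalBracket, cauchyApply_apply, LinearMap.sum_apply, map_sum, hmul]

theorem formalBracket_apply_of_left {w : ℕ → T} {n : ℕ} (hw : ∀ j < n, w j = 0)
    (b c : ℕ → T) : formalBracket m w b c n = m 0 (w n) (b 0) (c 0) := by
  have h₁ : ∀ j < n, cauchyApply m w j = 0 := fun j hj =>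
    cauchyApply_apply_eq_zero_of_right m hw hj
  have h₂ : ∀ j < n, cauchyApply (cauchyApply m w) b j = 0 := fun j hj =>
    cauchyApply_apply_eq_zero_of_left h₁ b hj
  rw [formalBracket, cauchyApply_apply_of_left h₂, cauchyApply_apply_of_left h₁,
    cauchyApply_apply_of_right m hw]

theorem formalBracket_apply_of_right {w : ℕ → T} {n : ℕ} (hw : ∀ j < n, w j = 0)
    (a b : ℕ → T) : formalBracket m a b w n = m 0 (a 0) (b 0) (w n) := by
  rw [formalBracket, cauchyApply_apply_of_right _ hw, cauchyApply_apply_zero,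
    cauchyApply_apply_zero]

def formalJacobiator : (ℕ → T) → (ℕ → T) → (ℕ → T) → (ℕ → T) → (ℕ → T) → ℕ → T :=
  jacobiator (formalBracket m) (α.compLeft ℕ)

def jacobiatorCoeff (r : ℕ) (a b c d e : T) : T :=
  ∑ p ∈ antidiagonal r,
    (m p.1 (α a) (α b) (m p.2 c d e) - m p.1 (m p.2 a b c) (α d) (α e) -
      m p.1 (α c) (m p.2 a b d) (α e) - m p.1 (α c) (α d) (m p.2 a b e))

theorem formalJacobiator_single_apply (a b c d e : T) (r : ℕ) :
    formalJacobiator m α (Pi.single 0 a) (Pi.single 0 b) (Pi.single 0 c) (Pi.single 0 d)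
      (Pi.single 0 e) r = jacobiatorCoeff m α r a b c d e := by
  simp only [formalJacobiator, jacobiator, formalBracket, compLeft_single,
    cauchyApply_single_right, Pi.sub_apply, cauchyApply_apply, LinearMap.sum_apply,
    jacobiatorCoeff, sum_sub_distrib]

theorem formalJacobiator_eq_add_shift₁ (a b c d e : ℕ → T) :
    formalJacobiator m α a b c d e = formalJacobiator m α (Pi.single 0 (a 0)) b c d e +
      shift (formalJacobiator m α (fun k => a (k + 1)) b c d e) := by
  conv_lhs => rw [single_add_shift a]
  simp only [formalJacobiator, jacobiator, formalBracket, map_add, map_sub,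
    LinearMap.add_apply, compLeft_shift, cauchyApply_shift_left, cauchyApply_shift_right]
  abel

theorem formalJacobiator_eq_add_shift₂ (a b c d e : ℕ → T) :
    formalJacobiator m α a b c d e = formalJacobiator m α a (Pi.single 0 (b 0)) c d e +
      shift (formalJacobiator m α a (fun k => b (k + 1)) c d e) := by
  conv_lhs => rw [single_add_shift b]
  simp only [formalJacobiator, jacobiator, formalBracket, map_add, map_sub,
    LinearMap.add_apply, compLeft_shift, cauchyApply_shift_left, cauchyApply_shift_right]
  abel

theorem formalJacobiator_eq_add_shift₃ (a b c d e : ℕ → T) :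
    formalJacobiator m α a b c d e = formalJacobiator m α a b (Pi.single 0 (c 0)) d e +
      shift (formalJacobiator m α a b (fun k => c (k + 1)) d e) := by
  conv_lhs => rw [single_add_shift c]
  simp only [formalJacobiator, jacobiator, formalBracket, map_add, map_sub,
    LinearMap.add_apply, compLeft_shift, cauchyApply_shift_left, cauchyApply_shift_right]
  abel

theorem formalJacobiator_eq_add_shift₄ (a b c d e : ℕ → T) :
    formalJacobiator m α a b c d e = formalJacobiator m α a b c (Pi.single 0 (d 0)) e +
      shift (formalJacobiator m α a b c (fun k => d (k + 1)) e) := by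
  conv_lhs => rw [single_add_shift d]
  simp only [formalJacobiator, jacobiator, formalBracket, map_add, map_sub,
    LinearMap.add_apply, compLeft_shift, cauchyApply_shift_left, cauchyApply_shift_right]
  abel

theorem formalJacobiator_eq_add_shift₅ (a b c d e : ℕ → T) :
    formalJacobiator m α a b c d e = formalJacobiator m α a b c d (Pi.single 0 (e 0)) +
      shift (formalJacobiator m α a b c d (fun k => e (k + 1))) := by
  conv_lhs => rw [single_add_shift e]
  simp only [formalJacobiator, jacobiator, formalBracket, map_add, map_sub, compLeft_shift,
    cauchyApply_shift_right]
  abel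

theorem formalJacobiator_eq_single_add_shift (a b c d e : ℕ → T) :
    formalJacobiator m α a b c d e =
      formalJacobiator m α (Pi.single 0 (a 0)) (Pi.single 0 (b 0)) (Pi.single 0 (c 0))
        (Pi.single 0 (d 0)) (Pi.single 0 (e 0)) +
      shift (formalJacobiator m α (fun k => a (k + 1)) b c d e +
        formalJacobiator m α (Pi.single 0 (a 0)) (fun k => b (k + 1)) c d e +
        formalJacobiator m α (Pi.single 0 (a 0)) (Pi.single 0 (b 0)) (fun k => c (k + 1)) d e +
        formalJacobiator m α (Pi.single 0 (a 0)) (Pi.single 0 (b 0)) (Pi.single 0 (c 0))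
          (fun k => d (k + 1)) e +
        formalJacobiator m α (Pi.single 0 (a 0)) (Pi.single 0 (b 0)) (Pi.single 0 (c 0))
          (Pi.single 0 (d 0)) (fun k => e (k + 1))) := by
  rw [formalJacobiator_eq_add_shift₁ m α a, formalJacobiator_eq_add_shift₂ m α _ b,
    formalJacobiator_eq_add_shift₃ m α _ _ c, formalJacobiator_eq_add_shift₄ m α _ _ _ d,
    formalJacobiator_eq_add_shift₅ m α _ _ _ _ e]
  simp only [map_add]
  abel

section Degree

variable {m α} {n : ℕ}
  (hJ : ∀ j < n, ∀ a b c d e : T, jacobiatorCoeff m α j a b c d e = 0)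
include hJ

theorem formalJacobiator_apply_eq_zero (a b c d e : ℕ → T) {k : ℕ} (hk : k < n) :
    formalJacobiator m α a b c d e k = 0 := by
  induction k generalizing a b c d e with
  | zero =>
    rw [formalJacobiator_eq_single_add_shift, Pi.add_apply, formalJacobiator_single_apply,
      hJ 0 hk, shift_apply_zero, add_zero]
  | succ k ih =>
    rw [formalJacobiator_eq_single_add_shift, Pi.add_apply, formalJacobiator_single_apply,
      hJ _ hk, shift_apply_succ]
    simp only [Pi.add_apply, ih _ _ _ _ _ (by omega), add_zero]

theorem formalJacobiator_apply_eq_jacobiatorCoeff (a b c d e : ℕ → T) :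
    formalJacobiator m α a b c d e n = jacobiatorCoeff m α n (a 0) (b 0) (c 0) (d 0) (e 0) := by
  rw [formalJacobiator_eq_single_add_shift, Pi.add_apply, formalJacobiator_single_apply]
  rcases n with _ | n
  · rw [shift_apply_zero, add_zero]
  · simp only [shift_apply_succ, Pi.add_apply,
      formalJacobiator_apply_eq_zero hJ _ _ _ _ _ (Nat.lt_succ_self n), add_zero]

theorem formalBracket_formalJacobiator_left_apply (a b c d e u v : ℕ → T) :
    formalBracket m (formalJacobiator m α a b c d e) u v n =
      m 0 (jacobiatorCoeff m α n (a 0) (b 0) (c 0) (d 0) (e 0)) (u 0) (v 0) := by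
  rw [formalBracket_apply_of_left m (fun j hj => formalJacobiator_apply_eq_zero hJ _ _ _ _ _ hj),
    formalJacobiator_apply_eq_jacobiatorCoeff hJ]

theorem formalBracket_formalJacobiator_right_apply (a b c d e u v : ℕ → T) :
    formalBracket m u v (formalJacobiator m α a b c d e) n =
      m 0 (u 0) (v 0) (jacobiatorCoeff m α n (a 0) (b 0) (c 0) (d 0) (e 0)) := by
  rw [formalBracket_apply_of_right m (fun j hj => formalJacobiator_apply_eq_zero hJ _ _ _ _ _ hj),
    formalJacobiator_apply_eq_jacobiatorCoeff hJ]

end Degree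

theorem coboundary5_jacobiatorCoeff_eq_zero (halt : ∀ i a c, m i a a c = 0)
    (hmul : ∀ i a b c, m i (α a) (α b) (α c) = α (m i a b c)) (n : ℕ)
    (hJ : ∀ j < n, ∀ a b c d e : T, jacobiatorCoeff m α j a b c d e = 0)
    (x₁ x₂ x₃ x₄ x₅ x₆ x₇ : T) :
    coboundary5 (fun a b c => m 0 a b c) α (jacobiatorCoeff m α n) x₁ x₂ x₃ x₄ x₅ x₆ x₇ = 0 := by
  have key : coboundary5 (formalBracket m) (α.compLeft ℕ) (formalJacobiator m α)
      (Pi.single 0 x₁) (Pi.single 0 x₂) (Pi.single 0 x₃) (Pi.single 0 x₄) (Pi.single 0 x₅)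
      (Pi.single 0 x₆) (Pi.single 0 x₇) = 0 :=
    coboundary5_jacobiator_eq_zero _ _ (formalBracket_sub_left m) (formalBracket_sub_right m)
      (formalBracket_swap m halt) (formalBracket_compLeft m α hmul) _ _ _ _ _ _ _
  have := congrFun key n
  simpa only [coboundary5, Pi.add_apply, Pi.sub_apply, Pi.zero_apply,
    formalBracket_formalJacobiator_left_apply hJ, formalBracket_formalJacobiator_right_apply hJ,
    formalJacobiator_apply_eq_jacobiatorCoeff hJ, formalBracket_single, compLeft_single,
    Pi.single_eq_same] using this

end FormalBracket

section Truncation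

def truncation {X : Type*} [Zero X] (n : ℕ) (μ : ℕ → X) (i : ℕ) : X :=
  if i ≤ n then μ i else 0

variable {X : Type*} [Zero X] {n : ℕ} (μ : ℕ → X)

theorem truncation_of_le {i : ℕ} (hi : i ≤ n) : truncation n μ i = μ i := if_pos hi

theorem truncation_of_lt {i : ℕ} (hi : n < i) : truncation n μ i = 0 := if_neg (by omega)

theorem truncation_induction {P : X → Prop} (h₀ : P 0) (hμ : ∀ i ≤ n, P (μ i)) (i : ℕ) :
    P (truncation n μ i) := by
  unfold truncation; split_ifs with hi
  exacts [hμ i hi, h₀]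

end Truncation

section DeformationEquation

variable {K : Type*} [CommSemiring K] {T : Type*} [AddCommGroup T] [Module K T]
  (μ : ℕ → T →ₗ[K] T →ₗ[K] T →ₗ[K] T) (α : T →ₗ[K] T)

theorem jacobiatorCoeff_eq_zero_of_sum_eq {r : ℕ} {a b c d e : T}
    (h : ∑ i ∈ range (r + 1), μ i (α a) (α b) (μ (r - i) c d e) =
      ∑ i ∈ range (r + 1),
        (μ i (μ (r - i) a b c) (α d) (α e) + μ i (α c) (μ (r - i) a b d) (α e) +
          μ i (α c) (α d) (μ (r - i) a b e))) :
    jacobiatorCoeff μ α r a b c d e = 0 := by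
  rw [jacobiatorCoeff, Nat.sum_antidiagonal_eq_sum_range_succ_mk]
  simp only [sum_sub_distrib]
  rw [h, sum_add_distrib, sum_add_distrib]
  abel

theorem jacobiatorCoeff_truncation_of_le {n r : ℕ} (hr : r ≤ n) :
    jacobiatorCoeff (truncation n μ) α r = jacobiatorCoeff μ α r := by
  funext a b c d e
  refine sum_congr rfl fun p hp => ?_
  have hp := HasAntidiagonal.mem_antidiagonal.1 hp
  rw [truncation_of_le μ (by omega : p.1 ≤ n), truncation_of_le μ (by omega : p.2 ≤ n)]

theorem jacobiatorCoeff_truncation_succ (n : ℕ) (a b c d e : T) :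
    jacobiatorCoeff (truncation n μ) α (n + 1) a b c d e =
      ∑ i ∈ Icc 1 n,
        (μ i (α a) (α b) (μ (n + 1 - i) c d e) - μ i (μ (n + 1 - i) a b c) (α d) (α e) -
          μ i (α c) (μ (n + 1 - i) a b d) (α e) - μ i (α c) (α d) (μ (n + 1 - i) a b e)) := by
  rw [jacobiatorCoeff, Nat.sum_antidiagonal_eq_sum_range_succ_mk, sum_range_succ,
    sum_range_succ', ← Ico_add_one_right_eq_Icc, sum_Ico_eq_sum_range, Nat.add_sub_cancel]
  have htop : truncation n μ (n + 1) = 0 := truncation_of_lt μ n.lt_succ_self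
  simp only [Nat.sub_zero, Nat.sub_self, htop, LinearMap.zero_apply, map_zero, sub_zero,
    add_zero]
  refine sum_congr rfl fun k hk => ?_
  have hk := mem_range.1 hk
  rw [truncation_of_le μ (by omega : k + 1 ≤ n),
    truncation_of_le μ (by omega : n + 1 - (k + 1) ≤ n), add_comm 1 k]

end DeformationEquation

end HomLts

open HomLts

theorem stmt11_general {K : Type*} [Field K] {T : Type*}
    [AddCommGroup T] [Module K T]
    -- `T` is a `G`-Hom Lie triple system
    (brT : T →ₗ[K] T →ₗ[K] T →ₗ[K] T) (α : T →ₗ[K] T)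
    -- `μ` is an equivariant formal one-parameter deformation of `T` of order `n`
    (n : ℕ) (μ : ℕ → T →ₗ[K] T →ₗ[K] T →ₗ[K] T)
    (hμ0 : μ 0 = brT)
    (hd0 : ∀ r ≤ n, ∀ a b c, μ r (α a) (α b) (α c) = α (μ r a b c))
    (hd1 : ∀ r ≤ n, ∀ a b, μ r a a b = 0)
    (hd3 : ∀ r ≤ n, ∀ a b c d e,
      ∑ i ∈ Finset.range (r + 1), μ i (α a) (α b) (μ (r - i) c d e) =
        ∑ i ∈ Finset.range (r + 1),
          (μ i (μ (r - i) a b c) (α d) (α e) + μ i (α c) (μ (r - i) a b d) (α e) +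
            μ i (α c) (α d) (μ (r - i) a b e)))
    -- the obstruction 5-cochain `F_{n+1}`
    (F : T → T → T → T → T → T)
    (hF : ∀ a b c d e, F a b c d e =
      ∑ i ∈ Finset.Icc 1 n,
        (μ i (α a) (α b) (μ (n + 1 - i) c d e) -
          μ i (μ (n + 1 - i) a b c) (α d) (α e) -
          μ i (α c) (μ (n + 1 - i) a b d) (α e) -
          μ i (α c) (α d) (μ (n + 1 - i) a b e))) :
    -- `δ⁵ F_{n+1} = 0`
    ∀ x₁ x₂ x₃ x₄ x₅ x₆ x₇ : T,
      brT (F x₁ x₂ x₃ x₄ x₅) (α (α x₆)) (α (α x₇)) -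
            brT (F x₁ x₂ x₃ x₄ x₆) (α (α x₅)) (α (α x₇)) +
          brT (α (α x₁)) (α (α x₂)) (F x₃ x₄ x₅ x₆ x₇) -
          brT (α (α x₃)) (α (α x₄)) (F x₁ x₂ x₅ x₆ x₇) +
          brT (α (α x₅)) (α (α x₆)) (F x₁ x₂ x₃ x₄ x₇) -
          F (brT x₁ x₂ x₃) (α x₄) (α x₅) (α x₆) (α x₇) -
          F (α x₃) (brT x₁ x₂ x₄) (α x₅) (α x₆) (α x₇) -
          F (α x₃) (α x₄) (brT x₁ x₂ x₅) (α x₆) (α x₇) -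
          F (α x₃) (α x₄) (α x₅) (brT x₁ x₂ x₆) (α x₇) -
          F (α x₃) (α x₄) (α x₅) (α x₆) (brT x₁ x₂ x₇) +
          F (α x₁) (α x₂) (brT x₃ x₄ x₅) (α x₆) (α x₇) +
          F (α x₁) (α x₂) (α x₅) (brT x₃ x₄ x₆) (α x₇) +
          F (α x₁) (α x₂) (α x₅) (α x₆) (brT x₃ x₄ x₇) -
        F (α x₁) (α x₂) (α x₃) (α x₄) (brT x₅ x₆ x₇) = 0 := by
  intro x₁ x₂ x₃ x₄ x₅ x₆ x₇
  have hF' : F = jacobiatorCoeff (truncation n μ) α (n + 1) := by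
    funext a b c d e
    rw [hF, jacobiatorCoeff_truncation_succ]
  have hbr : truncation n μ 0 = brT := (truncation_of_le μ n.zero_le).trans hμ0
  have key := coboundary5_jacobiatorCoeff_eq_zero (truncation n μ) α
    (fun i a c => truncation_induction μ (P := fun f => f a a c = 0) rfl
      (fun r hr => hd1 r hr a c) i)
    (fun i a b c => truncation_induction μ (P := fun f => f (α a) (α b) (α c) = α (f a b c))
      (by simp) (fun r hr => hd0 r hr a b c) i)
    (n + 1)
    (fun j hj a b c d e => by
      rw [jacobiatorCoeff_truncation_of_le μ α (Nat.lt_succ_iff.1 hj)]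
      exact jacobiatorCoeff_eq_zero_of_sum_eq μ α (hd3 j (by omega) a b c d e))
    x₁ x₂ x₃ x₄ x₅ x₆ x₇
  rw [← hF', hbr] at key
  exact key

/-- Let `μ_t = Σ_{i=0}^n μ_i t^i` be an equivariant formal
one-parameter deformation of order `n` of a `G`-Hom Lie triple system `(T, brT, α)`.
Then the `(n+1)`-th obstruction cochain `Ob_{n+1}(T) = F_{n+1}` is a 5-cocycle in the
equivariant complex `C⁵_{G(α)}(T)`: `δ⁵ F_{n+1} = 0` (the coboundary of the complex with
coefficients in the adjoint representation, written out explicitly below). -/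
theorem stmt11 {K : Type*} [Field K] {T G : Type*}
    [AddCommGroup T] [Module K T]
    [Group G] [DistribMulAction G T] [SMulCommClass G K T]
    -- `T` is a `G`-Hom Lie triple system
    (brT : T →ₗ[K] T →ₗ[K] T →ₗ[K] T) (α : T →ₗ[K] T)
    (hT1 : ∀ a c, brT a a c = 0)
    (hT2 : ∀ a b c, brT a b c + brT b c a + brT c a b = 0)
    (hT3 : ∀ a b c d e, brT (α a) (α b) (brT c d e) =
      brT (brT a b c) (α d) (α e) + brT (α c) (brT a b d) (α e) +
        brT (α c) (α d) (brT a b e))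
    (hTmul : ∀ a b c, α (brT a b c) = brT (α a) (α b) (α c))
    (hTact : ∀ (g : G) (a b c : T), g • brT a b c = brT (g • a) (g • b) (g • c))
    (hTα : ∀ (g : G) (a : T), α (g • a) = g • α a)
    -- `μ` is an equivariant formal one-parameter deformation of `T` of order `n`
    (n : ℕ) (μ : ℕ → T →ₗ[K] T →ₗ[K] T →ₗ[K] T)
    (hμ0 : μ 0 = brT)
    (hequiv : ∀ i ≤ n, ∀ (g : G) (a b c : T),
      μ i (g • a) (g • b) (g • c) = g • μ i a b c)
    (hd0 : ∀ r ≤ n, ∀ a b c, μ r (α a) (α b) (α c) = α (μ r a b c))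
    (hd1 : ∀ r ≤ n, ∀ a b, μ r a a b = 0)
    (hd2 : ∀ r ≤ n, ∀ a b c, μ r a b c + μ r b c a + μ r c a b = 0)
    (hd3 : ∀ r ≤ n, ∀ a b c d e,
      ∑ i ∈ Finset.range (r + 1), μ i (α a) (α b) (μ (r - i) c d e) =
        ∑ i ∈ Finset.range (r + 1),
          (μ i (μ (r - i) a b c) (α d) (α e) + μ i (α c) (μ (r - i) a b d) (α e) +
            μ i (α c) (α d) (μ (r - i) a b e)))
    -- the obstruction 5-cochain `F_{n+1}`
    (F : T → T → T → T → T → T)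
    (hF : ∀ a b c d e, F a b c d e =
      ∑ i ∈ Finset.Icc 1 n,
        (μ i (α a) (α b) (μ (n + 1 - i) c d e) -
          μ i (μ (n + 1 - i) a b c) (α d) (α e) -
          μ i (α c) (μ (n + 1 - i) a b d) (α e) -
          μ i (α c) (α d) (μ (n + 1 - i) a b e))) :
    -- `δ⁵ F_{n+1} = 0`
    ∀ x₁ x₂ x₃ x₄ x₅ x₆ x₇ : T,
      brT (F x₁ x₂ x₃ x₄ x₅) (α (α x₆)) (α (α x₇)) -
            brT (F x₁ x₂ x₃ x₄ x₆) (α (α x₅)) (α (α x₇)) +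
          brT (α (α x₁)) (α (α x₂)) (F x₃ x₄ x₅ x₆ x₇) -
          brT (α (α x₃)) (α (α x₄)) (F x₁ x₂ x₅ x₆ x₇) +
          brT (α (α x₅)) (α (α x₆)) (F x₁ x₂ x₃ x₄ x₇) -
          F (brT x₁ x₂ x₃) (α x₄) (α x₅) (α x₆) (α x₇) -
          F (α x₃) (brT x₁ x₂ x₄) (α x₅) (α x₆) (α x₇) -
          F (α x₃) (α x₄) (brT x₁ x₂ x₅) (α x₆) (α x₇) -
          F (α x₃) (α x₄) (α x₅) (brT x₁ x₂ x₆) (α x₇) -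
          F (α x₃) (α x₄) (α x₅) (α x₆) (brT x₁ x₂ x₇) +
          F (α x₁) (α x₂) (brT x₃ x₄ x₅) (α x₆) (α x₇) +
          F (α x₁) (α x₂) (α x₅) (brT x₃ x₄ x₆) (α x₇) +
          F (α x₁) (α x₂) (α x₅) (α x₆) (brT x₃ x₄ x₇) -
        F (α x₁) (α x₂) (α x₃) (α x₄) (brT x₅ x₆ x₇) = 0 :=
  stmt11_general brT α n μ hμ0 hd0 hd1 hd3 F hF
end

section
/- Let μ_t = Σ_{i=0}^{n} μ_i t^i be an equivariant formal one-parameter deformation of order n of a G-Hom Lts (T,[·,·,·],α). Then μ_t extends to an equivariant formal one-parameter deformation of order n+1 (i.e. there exists an equivariant 3-cochain μ_{n+1} ∈ C³_{G(α)}(T) such that μ_t + μ_{n+1}t^{n+1} is an equivariant deformation of order n+1) if and only if the cohomology class of the obstruction Ob_{n+1}(T) = F_{n+1} in H⁵_{G(α)}(T) vanishes, i.e. F_{n+1} = δ³μ_{n+1} for some μ_{n+1} ∈ C³_{G(α)}(T). -/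
/-- An equivariant formal one-parameter deformation of order `n` of the `G`-Hom Lie
triple system `(T, brT, α)`: a family of equivariant trilinear maps `μ_i` (`0 ≤ i ≤ n`)
with `μ₀ = brT` satisfying the deformation equations for all `r ≤ n`. -/
def IsEquivDefOrder {K : Type*} [Field K] {T : Type*} (G : Type*)
    [AddCommGroup T] [Module K T]
    [Group G] [DistribMulAction G T] [SMulCommClass G K T]
    (brT : T →ₗ[K] T →ₗ[K] T →ₗ[K] T) (α : T →ₗ[K] T)
    (n : ℕ) (μ : ℕ → T →ₗ[K] T →ₗ[K] T →ₗ[K] T) : Prop :=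
  μ 0 = brT ∧
  (∀ i ≤ n, ∀ (g : G) (a b c : T),
    μ i (g • a) (g • b) (g • c) = g • μ i a b c) ∧
  (∀ r ≤ n, ∀ a b c, μ r (α a) (α b) (α c) = α (μ r a b c)) ∧
  (∀ r ≤ n, ∀ a b, μ r a a b = 0) ∧
  (∀ r ≤ n, ∀ a b c, μ r a b c + μ r b c a + μ r c a b = 0) ∧
  (∀ r ≤ n, ∀ a b c d e,
    ∑ i ∈ Finset.range (r + 1), μ i (α a) (α b) (μ (r - i) c d e) =
      ∑ i ∈ Finset.range (r + 1),
        (μ i (μ (r - i) a b c) (α d) (α e) + μ i (α c) (μ (r - i) a b d) (α e) +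
          μ i (α c) (α d) (μ (r - i) a b e)))

/-- Let `μ_t = Σ_{i=0}^n μ_i t^i` be an equivariant formal
one-parameter deformation of order `n` of a `G`-Hom Lie triple system `(T, brT, α)`.
Then `μ_t` extends to an equivariant deformation of order `n+1` (i.e. there is an
equivariant 3-cochain `ν = μ_{n+1} ∈ C³_{G(α)}(T)` so that `μ_t + ν t^{n+1}` is an
equivariant deformation of order `n+1`) if and only if the cohomology class of the
obstruction `Ob_{n+1}(T) = F_{n+1}` vanishes, i.e. `F_{n+1} = δ³ ν` for some
`ν ∈ C³_{G(α)}(T)`. -/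
theorem stmt12 {K : Type*} [Field K] {T G : Type*}
    [AddCommGroup T] [Module K T]
    [Group G] [DistribMulAction G T] [SMulCommClass G K T]
    -- `T` is a `G`-Hom Lie triple system
    (brT : T →ₗ[K] T →ₗ[K] T →ₗ[K] T) (α : T →ₗ[K] T)
    (hT1 : ∀ a c, brT a a c = 0)
    (hT2 : ∀ a b c, brT a b c + brT b c a + brT c a b = 0)
    (hT3 : ∀ a b c d e, brT (α a) (α b) (brT c d e) =
      brT (brT a b c) (α d) (α e) + brT (α c) (brT a b d) (α e) +
        brT (α c) (α d) (brT a b e))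
    (hTmul : ∀ a b c, α (brT a b c) = brT (α a) (α b) (α c))
    (hTact : ∀ (g : G) (a b c : T), g • brT a b c = brT (g • a) (g • b) (g • c))
    (hTα : ∀ (g : G) (a : T), α (g • a) = g • α a)
    -- `μ` is an equivariant formal one-parameter deformation of `T` of order `n`
    (n : ℕ) (μ : ℕ → T →ₗ[K] T →ₗ[K] T →ₗ[K] T)
    (hdef : IsEquivDefOrder G brT α n μ)
    -- the obstruction 5-cochain `F_{n+1}`
    (F : T → T → T → T → T → T)
    (hF : ∀ a b c d e, F a b c d e =
      ∑ i ∈ Finset.Icc 1 n,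
        (μ i (α a) (α b) (μ (n + 1 - i) c d e) -
          μ i (μ (n + 1 - i) a b c) (α d) (α e) -
          μ i (α c) (μ (n + 1 - i) a b d) (α e) -
          μ i (α c) (α d) (μ (n + 1 - i) a b e))) :
    -- `μ_t` extends to order `n+1` …
    (∃ ν : T →ₗ[K] T →ₗ[K] T →ₗ[K] T,
      (∀ (g : G) (a b c : T), ν (g • a) (g • b) (g • c) = g • ν a b c) ∧
      (∀ a b c, ν (α a) (α b) (α c) = α (ν a b c)) ∧
      (∀ a b, ν a a b = 0) ∧
      (∀ a b c, ν a b c + ν b c a + ν c a b = 0) ∧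
      IsEquivDefOrder G brT α (n + 1) (Function.update μ (n + 1) ν))
    -- … iff the obstruction is an equivariant coboundary
    ↔ (∃ ν : T →ₗ[K] T →ₗ[K] T →ₗ[K] T,
      (∀ (g : G) (a b c : T), ν (g • a) (g • b) (g • c) = g • ν a b c) ∧
      (∀ a b c, ν (α a) (α b) (α c) = α (ν a b c)) ∧
      (∀ a b, ν a a b = 0) ∧
      (∀ a b c, ν a b c + ν b c a + ν c a b = 0) ∧
      (∀ x₁ x₂ x₃ x₄ x₅,
        brT (ν x₁ x₂ x₃) (α x₄) (α x₅) - brT (ν x₁ x₂ x₄) (α x₃) (α x₅) -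
              brT (α x₁) (α x₂) (ν x₃ x₄ x₅) + brT (α x₃) (α x₄) (ν x₁ x₂ x₅) +
            ν (brT x₁ x₂ x₃) (α x₄) (α x₅) + ν (α x₃) (brT x₁ x₂ x₄) (α x₅) +
            ν (α x₃) (α x₄) (brT x₁ x₂ x₅) -
          ν (α x₁) (α x₂) (brT x₃ x₄ x₅) = F x₁ x₂ x₃ x₄ x₅)) := by
  
  obtain ⟨h0, heq, hα, halt, hcyc, hmain⟩ := hdef
  -- antisymmetry of `brT` in its first two arguments
  have hskew : ∀ x y z : T, brT x y z = - brT y x z := by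
    intro x y z
    have h := hT1 (x + y) z
    simp only [map_add, LinearMap.add_apply, hT1, zero_add, add_zero] at h
    exact eq_neg_of_add_eq_zero_right h
  -- splitting a sum over `range (n+2)` into the two boundary terms and the middle
  have hsplit : ∀ f : ℕ → T,
      ∑ i ∈ Finset.range (n + 1 + 1), f i
        = f 0 + (∑ i ∈ Finset.Icc 1 n, f i) + f (n + 1) := by
    intro f
    rw [Finset.sum_range_succ]
    congr 1
    have hr : Finset.range (n + 1) = insert 0 (Finset.Icc 1 n) := by
      ext i
      simp only [Finset.mem_range, Finset.mem_insert, Finset.mem_Icc]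
      omega
    rw [hr, Finset.sum_insert (by simp)]
  have keyiff : ∀ {X Y U V : T}, X - Y = V - U → (U = V ↔ X = Y) := by
    intro X Y U V hk
    constructor <;> intro h
    · exact sub_eq_zero.mp (hk.trans (sub_eq_zero.mpr h.symm))
    · exact (sub_eq_zero.mp (hk.symm.trans (sub_eq_zero.mpr h))).symm
  -- the key pointwise equivalence at order `n+1`
  have hkey : ∀ (ν : T →ₗ[K] T →ₗ[K] T →ₗ[K] T) (a b c d e : T),
      (∑ i ∈ Finset.range (n + 1 + 1),
          Function.update μ (n + 1) ν i (α a) (α b)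
            (Function.update μ (n + 1) ν (n + 1 - i) c d e) =
        ∑ i ∈ Finset.range (n + 1 + 1),
          (Function.update μ (n + 1) ν i
              (Function.update μ (n + 1) ν (n + 1 - i) a b c) (α d) (α e) +
            Function.update μ (n + 1) ν i (α c)
              (Function.update μ (n + 1) ν (n + 1 - i) a b d) (α e) +
            Function.update μ (n + 1) ν i (α c) (α d)
              (Function.update μ (n + 1) ν (n + 1 - i) a b e))) ↔
      (brT (ν a b c) (α d) (α e) - brT (ν a b d) (α c) (α e) -
            brT (α a) (α b) (ν c d e) + brT (α c) (α d) (ν a b e) +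
          ν (brT a b c) (α d) (α e) + ν (α c) (brT a b d) (α e) +
          ν (α c) (α d) (brT a b e) -
        ν (α a) (α b) (brT c d e) = F a b c d e) := by
    intro ν a b c d e
    have hup : ∀ i, i ≤ n → Function.update μ (n + 1) ν i = μ i := by
      intro i hi
      exact Function.update_of_ne (by omega) _ _
    have hup0 : Function.update μ (n + 1) ν 0 = brT := (hup 0 (Nat.zero_le n)).trans h0
    have hup2 : Function.update μ (n + 1) ν (n + 1) = ν := Function.update_self _ _ _
    rw [hsplit, hsplit]
    rw [Nat.sub_zero, Nat.sub_self, hup0, hup2]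
    have e1 : ∑ i ∈ Finset.Icc 1 n,
        Function.update μ (n + 1) ν i (α a) (α b)
          (Function.update μ (n + 1) ν (n + 1 - i) c d e)
        = ∑ i ∈ Finset.Icc 1 n, μ i (α a) (α b) (μ (n + 1 - i) c d e) := by
      refine Finset.sum_congr rfl fun i hi => ?_
      simp only [Finset.mem_Icc] at hi
      rw [hup i hi.2, hup (n + 1 - i) (by omega)]
    have e2 : ∑ i ∈ Finset.Icc 1 n,
        (Function.update μ (n + 1) ν i
            (Function.update μ (n + 1) ν (n + 1 - i) a b c) (α d) (α e) +
          Function.update μ (n + 1) ν i (α c)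
            (Function.update μ (n + 1) ν (n + 1 - i) a b d) (α e) +
          Function.update μ (n + 1) ν i (α c) (α d)
            (Function.update μ (n + 1) ν (n + 1 - i) a b e))
        = (∑ i ∈ Finset.Icc 1 n, μ i (μ (n + 1 - i) a b c) (α d) (α e)) +
          (∑ i ∈ Finset.Icc 1 n, μ i (α c) (μ (n + 1 - i) a b d) (α e)) +
          (∑ i ∈ Finset.Icc 1 n, μ i (α c) (α d) (μ (n + 1 - i) a b e)) := by
      rw [← Finset.sum_add_distrib, ← Finset.sum_add_distrib]
      refine Finset.sum_congr rfl fun i hi => ?_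
      simp only [Finset.mem_Icc] at hi
      rw [hup i hi.2, hup (n + 1 - i) (by omega)]
    rw [e1, e2, hF]
    rw [hskew (ν a b d) (α c) (α e)]
    simp only [Finset.sum_sub_distrib]
    set t1 := brT (α a) (α b) (ν c d e) with ht1
    set t2 := ν (α a) (α b) (brT c d e) with ht2
    set t3 := brT (ν a b c) (α d) (α e) with ht3
    set t4 := brT (α c) (ν a b d) (α e) with ht4
    set t5 := brT (α c) (α d) (ν a b e) with ht5
    set t6 := ν (brT a b c) (α d) (α e) with ht6
    set t7 := ν (α c) (brT a b d) (α e) with ht7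
    set t8 := ν (α c) (α d) (brT a b e) with ht8
    set S1 := ∑ i ∈ Finset.Icc 1 n, μ i (α a) (α b) (μ (n + 1 - i) c d e) with hS1
    set S2 := ∑ i ∈ Finset.Icc 1 n, μ i (μ (n + 1 - i) a b c) (α d) (α e) with hS2
    set S3 := ∑ i ∈ Finset.Icc 1 n, μ i (α c) (μ (n + 1 - i) a b d) (α e) with hS3
    set S4 := ∑ i ∈ Finset.Icc 1 n, μ i (α c) (α d) (μ (n + 1 - i) a b e) with hS4
    exact keyiff (by abel)
  constructor
  · rintro ⟨ν, h1, h2, h3, h4, h5⟩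
    exact ⟨ν, h1, h2, h3, h4, fun a b c d e =>
      (hkey ν a b c d e).mp (h5.2.2.2.2.2 (n + 1) le_rfl a b c d e)⟩
  · rintro ⟨ν, h1, h2, h3, h4, h5⟩
    refine ⟨ν, h1, h2, h3, h4, ?_, ?_, ?_, ?_, ?_, ?_⟩
    · rw [Function.update_of_ne (by omega)]; exact h0
    · intro i hi g a b c
      rcases eq_or_lt_of_le hi with h' | h'
      · subst h'; rw [Function.update_self]; exact h1 g a b c
      · rw [Function.update_of_ne (by omega)]; exact heq i (by omega) g a b c
    · intro r hr a b c
      rcases eq_or_lt_of_le hr with h' | h'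
      · subst h'; rw [Function.update_self]; exact h2 a b c
      · rw [Function.update_of_ne (by omega)]; exact hα r (by omega) a b c
    · intro r hr a b
      rcases eq_or_lt_of_le hr with h' | h'
      · subst h'; rw [Function.update_self]; exact h3 a b
      · rw [Function.update_of_ne (by omega)]; exact halt r (by omega) a b
    · intro r hr a b c
      rcases eq_or_lt_of_le hr with h' | h'
      · subst h'; rw [Function.update_self]; exact h4 a b c
      · rw [Function.update_of_ne (by omega)]; exact hcyc r (by omega) a b c
    · intro r hr a b c d e
      rcases eq_or_lt_of_le hr with h' | h'
      · subst h'
        exact (hkey ν a b c d e).mpr (h5 a b c d e)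
      · have hrn : r ≤ n := by omega
        have e1 : ∀ i ∈ Finset.range (r + 1),
            Function.update μ (n + 1) ν i (α a) (α b)
              (Function.update μ (n + 1) ν (r - i) c d e)
            = μ i (α a) (α b) (μ (r - i) c d e) := by
          intro i hi
          simp only [Finset.mem_range] at hi
          rw [Function.update_of_ne (by omega), Function.update_of_ne (by omega)]
        have e2 : ∀ i ∈ Finset.range (r + 1),
            (Function.update μ (n + 1) ν i
                (Function.update μ (n + 1) ν (r - i) a b c) (α d) (α e) +
              Function.update μ (n + 1) ν i (α c)
                (Function.update μ (n + 1) ν (r - i) a b d) (α e) +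
              Function.update μ (n + 1) ν i (α c) (α d)
                (Function.update μ (n + 1) ν (r - i) a b e))
            = (μ i (μ (r - i) a b c) (α d) (α e) + μ i (α c) (μ (r - i) a b d) (α e) +
                μ i (α c) (α d) (μ (r - i) a b e)) := by
          intro i hi
          simp only [Finset.mem_range] at hi
          rw [Function.update_of_ne (by omega), Function.update_of_ne (by omega)]
        rw [Finset.sum_congr rfl e1, Finset.sum_congr rfl e2]
        exact hmain r hrn a b c d e
end

section
/- Let μ_t and μ̃_t be two equivariant formal one-parameter deformations of a G-Hom Lts (T,[·,·,·],α), and suppose they are equivalent via an equivariant formal isomorphism Ψ_t = Σ_{i≥0} ψ_i t^i. Then μ₁ − μ̃₁ = δ¹ψ₁; explicitly, (μ₁ − μ̃₁)(a,b,c) = [ψ₁(a),b,c] + [a,ψ₁(b),c] + [a,b,ψ₁(c)] − ψ₁([a,b,c]) for all a,b,c ∈ T. Hence the cohomology class of the infinitesimal of an equivariant deformation in H³_{G(α)}(T) is determined by the equivalence class of the deformation. -/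
/-- Let `μ_t` and `μ̃_t` be two equivariant formal one-parameter
deformations of a `G`-Hom Lie triple system `(T, brT, α)` which are equivalent via an
equivariant formal isomorphism `Ψ_t = Σ ψ_i t^i`.  Then `μ₁ − μ̃₁ = δ¹ ψ₁`; explicitly,
`(μ₁ − μ̃₁)(a,b,c) = [ψ₁ a, b, c] + [a, ψ₁ b, c] + [a, b, ψ₁ c] − ψ₁([a,b,c])`.  Hence
the cohomology class of the infinitesimal in `H³_{G(α)}(T)` is determined by the
equivalence class of the deformation. -/
theorem stmt14 {K : Type*} [Field K] {T G : Type*}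
    [AddCommGroup T] [Module K T]
    [Group G] [DistribMulAction G T] [SMulCommClass G K T]
    -- `T` is a `G`-Hom Lie triple system
    (brT : T →ₗ[K] T →ₗ[K] T →ₗ[K] T) (α : T →ₗ[K] T)
    (hT1 : ∀ a c, brT a a c = 0)
    (hT2 : ∀ a b c, brT a b c + brT b c a + brT c a b = 0)
    (hT3 : ∀ a b c d e, brT (α a) (α b) (brT c d e) =
      brT (brT a b c) (α d) (α e) + brT (α c) (brT a b d) (α e) +
        brT (α c) (α d) (brT a b e))
    (hTmul : ∀ a b c, α (brT a b c) = brT (α a) (α b) (α c))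
    (hTact : ∀ (g : G) (a b c : T), g • brT a b c = brT (g • a) (g • b) (g • c))
    (hTα : ∀ (g : G) (a : T), α (g • a) = g • α a)
    -- `μ` and `μ̃` are equivariant formal one-parameter deformations of `T`
    (μ μ' : ℕ → T →ₗ[K] T →ₗ[K] T →ₗ[K] T)
    (hμ0 : μ 0 = brT) (hμ'0 : μ' 0 = brT)
    (hequiv : ∀ (i : ℕ) (g : G) (a b c : T),
      μ i (g • a) (g • b) (g • c) = g • μ i a b c)
    (hequiv' : ∀ (i : ℕ) (g : G) (a b c : T),
      μ' i (g • a) (g • b) (g • c) = g • μ' i a b c)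
    (hd0 : ∀ r a b c, μ r (α a) (α b) (α c) = α (μ r a b c))
    (hd0' : ∀ r a b c, μ' r (α a) (α b) (α c) = α (μ' r a b c))
    (hd1 : ∀ r a b, μ r a a b = 0) (hd1' : ∀ r a b, μ' r a a b = 0)
    (hd2 : ∀ r a b c, μ r a b c + μ r b c a + μ r c a b = 0)
    (hd2' : ∀ r a b c, μ' r a b c + μ' r b c a + μ' r c a b = 0)
    (hd3 : ∀ r a b c d e,
      ∑ i ∈ Finset.range (r + 1), μ i (α a) (α b) (μ (r - i) c d e) =
        ∑ i ∈ Finset.range (r + 1),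
          (μ i (μ (r - i) a b c) (α d) (α e) + μ i (α c) (μ (r - i) a b d) (α e) +
            μ i (α c) (α d) (μ (r - i) a b e)))
    (hd3' : ∀ r a b c d e,
      ∑ i ∈ Finset.range (r + 1), μ' i (α a) (α b) (μ' (r - i) c d e) =
        ∑ i ∈ Finset.range (r + 1),
          (μ' i (μ' (r - i) a b c) (α d) (α e) +
            μ' i (α c) (μ' (r - i) a b d) (α e) +
            μ' i (α c) (α d) (μ' (r - i) a b e)))
    -- `Ψ_t = Σ ψ_i t^i` is an equivariant formal isomorphism from `μ_t` to `μ̃_t`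
    (ψ : ℕ → T →ₗ[K] T)
    (hψ0 : ψ 0 = LinearMap.id)
    (hψequiv : ∀ (i : ℕ) (g : G) (x : T), ψ i (g • x) = g • ψ i x)
    (hψα : ∀ i x, ψ i (α x) = α (ψ i x))
    (hΨ : ∀ (r : ℕ) (a b c : T),
      ∑ p ∈ Finset.range (r + 1), ∑ i ∈ Finset.range (r + 1 - p),
        ∑ j ∈ Finset.range (r + 1 - p - i),
          μ' p (ψ i a) (ψ j b) (ψ (r - p - i - j) c) =
        ∑ i ∈ Finset.range (r + 1), ψ i (μ (r - i) a b c)) :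
    -- `μ₁ − μ̃₁ = δ¹ ψ₁`
    (∀ a b c, μ 1 a b c - μ' 1 a b c =
      brT (ψ 1 a) b c - brT (ψ 1 b) a c + brT a b (ψ 1 c) - ψ 1 (brT a b c)) ∧
    (∀ a b c, μ 1 a b c - μ' 1 a b c =
      brT (ψ 1 a) b c + brT a (ψ 1 b) c + brT a b (ψ 1 c) - ψ 1 (brT a b c)) := by
  have anti : ∀ x y c : T, brT x y c = - brT y x c := by
    intro x y c
    have h := hT1 (x + y) c
    have hx := hT1 x c
    have hy := hT1 y c
    simp only [map_add, LinearMap.add_apply, hx, hy, zero_add, add_zero] at h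
    exact eq_neg_of_add_eq_zero_left (by rw [add_comm]; exact h)
  have key : ∀ a b c : T, μ 1 a b c - μ' 1 a b c =
      brT (ψ 1 a) b c + brT a (ψ 1 b) c + brT a b (ψ 1 c) - ψ 1 (brT a b c) := by
    intro a b c
    have h := hΨ 1 a b c
    simp only [Finset.sum_range_succ, Finset.sum_range_zero, Finset.sum_range_one,
      hψ0, hμ0, hμ'0, LinearMap.id_coe, id_eq, zero_add] at h
    norm_num at h
    rw [sub_eq_iff_eq_add, eq_sub_of_add_eq h.symm]
    abel
  refine ⟨?_, key⟩
  intro a b c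
  rw [key a b c, anti a (ψ 1 b) c]
  abel
end

section
/- Let V be a vector space over a field k, μ : V×V → k a symmetric bilinear form (μ(x,y) = μ(y,x)), and α : V → V a linear map invariant with respect to μ in the sense that μ(α(x),α(y)) = μ(x,y) for all x,y ∈ V. Then for any scalar λ ∈ k, the trilinear bracket [x,y,z] = λ(μ(y,z)α(x) − μ(z,x)α(y)) makes (V,[·,·,·],α) a Hom Lie triple system. -/
/-- Let `V` be a vector space over a field `k`, `μ` a symmetric bilinear
form on `V`, and `α : V → V` a linear map invariant with respect to `μ`. Then for any
scalar `lam ∈ k`, the trilinear bracket `[x,y,z] = lam • (μ(y,z) α(x) − μ(z,x) α(y))`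
makes `(V, [·,·,·], α)` a Hom Lie triple system. -/
theorem stmt15 {k V : Type*} [Field k] [AddCommGroup V] [Module k V]
    (μ : V →ₗ[k] V →ₗ[k] k) (hμsymm : ∀ x y, μ x y = μ y x)
    (α : V →ₗ[k] V) (hαinv : ∀ x y, μ (α x) (α y) = μ x y) (lam : k)
    (br : V → V → V → V)
    (hbr : ∀ x y z, br x y z = lam • (μ y z • α x - μ z x • α y)) :
    (∀ y z, IsLinearMap k fun x => br x y z) ∧
    (∀ x z, IsLinearMap k fun y => br x y z) ∧
    (∀ x y, IsLinearMap k fun z => br x y z) ∧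
    (∀ a c, br a a c = 0) ∧
    (∀ a b c, br a b c + br b c a + br c a b = 0) ∧
    (∀ a b c d e,
      br (α a) (α b) (br c d e) =
        br (br a b c) (α d) (α e) + br (α c) (br a b d) (α e) +
          br (α c) (α d) (br a b e)) := by
  refine ⟨?_, ?_, ?_, ?_, ?_, ?_⟩
  · intro y z
    constructor <;> intro a b <;>
      simp [hbr, smul_sub, smul_smul, mul_comm, add_smul, hμsymm z] <;> module
  · intro x z
    constructor <;> intro a b <;>
      simp [hbr, smul_sub, smul_smul, mul_comm, add_smul, hμsymm z] <;> module
  · intro x y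
    constructor <;> intro a b <;>
      simp [hbr, smul_sub, smul_smul, mul_comm, add_smul] <;> module
  · intro a c
    simp [hbr, hμsymm a c]
  · intro a b c
    simp only [hbr]
    rw [hμsymm c a, hμsymm a b, hμsymm b c]
    module
  · intro a b c d e
    simp only [hbr, map_smul, map_sub, map_add, smul_sub, smul_smul,
      LinearMap.smul_apply, LinearMap.sub_apply, smul_eq_mul, hαinv]
    rw [hμsymm a e, hμsymm d b, hμsymm a c, hμsymm b e]
    module
end

section
/- Let A be an associative algebra over a field k and α : A → A an algebra morphism. Define the trilinear map ⟨x,y,z⟩ = 2[[x,y],z] − [[z,x],y] − [[y,z],x], where [x,y] = xy − yx is the commutator. Then (A, α∘⟨·,·,·⟩, α), i.e. A with the bracket (x,y,z) ↦ α(⟨x,y,z⟩) and twist map α, is a Hom Lie triple system. -/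
private lemma brkey {k A : Type*} [Field k] [Ring A] [Algebra k A]
    (α : A →ₐ[k] A) (br : A → A → A → A)
    (hbr : ∀ x y z, br x y z =
      α (2 • ((x * y - y * x) * z - z * (x * y - y * x))
          - ((z * x - x * z) * y - y * (z * x - x * z))
          - ((y * z - z * y) * x - x * (y * z - z * y)))) :
    ∀ x y z, br x y z = 3 • α ((x * y - y * x) * z - z * (x * y - y * x)) := by
  intro x y z
  rw [hbr, ← map_nsmul]
  congr 1
  noncomm_ring

/-- Let `A` be an associative algebra over a field `k` and `α : A → A`
an algebra morphism.  With `⟨x,y,z⟩ = 2[[x,y],z] − [[z,x],y] − [[y,z],x]` (commutator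
brackets), `(A, α ∘ ⟨·,·,·⟩, α)` is a Hom Lie triple system. -/
theorem stmt16 {k A : Type*} [Field k] [Ring A] [Algebra k A]
    (α : A →ₐ[k] A) (br : A → A → A → A)
    (hbr : ∀ x y z, br x y z =
      α (2 • ((x * y - y * x) * z - z * (x * y - y * x))
          - ((z * x - x * z) * y - y * (z * x - x * z))
          - ((y * z - z * y) * x - x * (y * z - z * y)))) :
    (∀ y z, IsLinearMap k fun x => br x y z) ∧
    (∀ x z, IsLinearMap k fun y => br x y z) ∧
    (∀ x y, IsLinearMap k fun z => br x y z) ∧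
    (∀ a c, br a a c = 0) ∧
    (∀ a b c, br a b c + br b c a + br c a b = 0) ∧
    (∀ a b c d e,
      br (α a) (α b) (br c d e) =
        br (br a b c) (α d) (α e) + br (α c) (br a b d) (α e) +
          br (α c) (α d) (br a b e)) := by
  have key := brkey α br hbr
  refine ⟨?_, ?_, ?_, ?_, ?_, ?_⟩
  · intro y z
    refine ⟨fun a b => ?_, fun c a => ?_⟩
    · simp only [key, ← map_add, ← smul_add]; congr 2; noncomm_ring
    · simp only [key, ← map_smul]
      rw [smul_comm]; congr 2
      simp only [smul_sub, smul_mul_assoc, mul_smul_comm, sub_mul, mul_sub]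
      simp only [← smul_sub, map_smul]
  · intro x z
    refine ⟨fun a b => ?_, fun c a => ?_⟩
    · simp only [key, ← map_add, ← smul_add]; congr 2; noncomm_ring
    · simp only [key, ← map_smul]
      rw [smul_comm]; congr 2
      simp only [smul_sub, smul_mul_assoc, mul_smul_comm, sub_mul, mul_sub]
      simp only [← smul_sub, map_smul]
  · intro x y
    refine ⟨fun a b => ?_, fun c a => ?_⟩
    · simp only [key, ← map_add, ← smul_add]; congr 2; noncomm_ring
    · simp only [key, ← map_smul]
      rw [smul_comm]; congr 2
      simp only [smul_sub, smul_mul_assoc, mul_smul_comm, sub_mul, mul_sub]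
      simp only [← smul_sub, map_smul]
  · intro a c
    simp [key]
  · intro a b c
    simp only [key, ← smul_add, ← map_add]
    convert smul_zero 3
    rw [← map_zero α]; congr 1; noncomm_ring
  · intro a b c d e
    simp only [key, map_nsmul, map_sub, map_mul, smul_sub, smul_mul_assoc,
      mul_smul_comm, AlgHom.commutes]
    noncomm_ring
end

section
/- Let (A, μ, α) be a Hom-associative algebra over a field k, i.e. a k-vector space A with a bilinear multiplication μ and a linear map α satisfying μ(α(x), μ(y,z)) = μ(μ(x,y), α(z)) for all x,y,z ∈ A, with α multiplicative (α(μ(x,y)) = μ(α(x),α(y))). Then (A, [·,·,·], α²) is a Hom Lie triple system, where [x,y,z] = μ(μ(x,y)−μ(y,x), α(z)) − μ(μ(z,x), α(y)) + μ(μ(z,y), α(x)). -/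
set_option maxHeartbeats 2000000 in
/-- Let `(A, μ, α)` be a multiplicative Hom-associative algebra over a
field `k`.  Then `(A, [·,·,·], α²)` is a Hom Lie triple system, where
`[x,y,z] = μ(μ(x,y) − μ(y,x), α(z)) − μ(μ(z,x), α(y)) + μ(μ(z,y), α(x))`. -/
theorem stmt17 {k A : Type*} [Field k] [AddCommGroup A] [Module k A]
    (μ : A →ₗ[k] A →ₗ[k] A) (α : A →ₗ[k] A)
    (hassoc : ∀ x y z, μ (α x) (μ y z) = μ (μ x y) (α z))
    (hmult : ∀ x y, α (μ x y) = μ (α x) (α y))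
    (br : A → A → A → A)
    (hbr : ∀ x y z, br x y z =
      μ (μ x y) (α z) - μ (μ y x) (α z) - μ (μ z x) (α y) + μ (μ z y) (α x)) :
    (∀ y z, IsLinearMap k fun x => br x y z) ∧
    (∀ x z, IsLinearMap k fun y => br x y z) ∧
    (∀ x y, IsLinearMap k fun z => br x y z) ∧
    (∀ a c, br a a c = 0) ∧
    (∀ a b c, br a b c + br b c a + br c a b = 0) ∧
    (∀ a b c d e,
      br (α (α a)) (α (α b)) (br c d e) =
        br (br a b c) (α (α d)) (α (α e)) + br (α (α c)) (br a b d) (α (α e)) +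
          br (α (α c)) (α (α d)) (br a b e)) := by
  have h2 : ∀ x y u v, μ (μ (α x) (α y)) (μ u v) = μ (μ (μ x y) u) (α v) := by
    intro x y u v; rw [← hmult, hassoc]
  refine ⟨?_, ?_, ?_, ?_, ?_, ?_⟩
  · intro y z
    constructor <;> intros <;>
      simp only [hbr, map_add, map_smul, LinearMap.add_apply, LinearMap.smul_apply,
        smul_sub, smul_add] <;> abel
  · intro x z
    constructor <;> intros <;>
      simp only [hbr, map_add, map_smul, LinearMap.add_apply, LinearMap.smul_apply,
        smul_sub, smul_add] <;> abel
  · intro x y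
    constructor <;> intros <;>
      simp only [hbr, map_add, map_smul, LinearMap.add_apply, LinearMap.smul_apply,
        smul_sub, smul_add] <;> abel
  · intro a c; simp only [hbr]; abel
  · intro a b c; simp only [hbr]; abel
  · intro a b c d e
    simp only [hbr, map_add, map_sub, LinearMap.add_apply, LinearMap.sub_apply,
      hmult, hassoc, h2]
    abel
end
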